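/- arXiv:2211.01912 — 8 statements merged into one kernel-verified Lean document; each statement's English description precedes it below -/
import Mathlib

section
/- Let G be a finite simple graph on at least 3 vertices with 0/1 edge weights. Let D ⊆ E(G) be a minimum-weight 2-edge-cover of G (a 2-edge-cover of smallest weight among all 2-edge-covers of G), let F ⊆ E(G) be a 2-edge-connected spanning subgraph of G, and let L ⊆ V(G). Denote by D^L (respectively F^L) the set of edges of D (respectively F) having at least one endpoint in L. If every vertex of V(G) \ L is incident to at least two edges of D both of whose endpoints lie in V(G) \ L, then ||F^L|| ≥ ||D^L||. -/
open scoped Classical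

/-- Weight of an edge set: sum of the 0/1 weights of its edges. -/
def wt {V : Type*} (w : Sym2 V → ℕ) (F : Finset (Sym2 V)) : ℕ := ∑ e ∈ F, w e

/-- `F` is (the edge set of) a 2-edge-connected spanning subgraph of `G`:
`F ⊆ E(G)`, the spanning subgraph `(V, F)` is connected, has at least 2 vertices,
and deleting any single edge keeps it connected (no bridges). -/
def IsTwoECSS {V : Type*} [Fintype V] (G : SimpleGraph V) (F : Finset (Sym2 V)) : Prop :=
  (↑F : Set (Sym2 V)) ⊆ G.edgeSet ∧
    (SimpleGraph.fromEdgeSet (↑F : Set (Sym2 V))).Connected ∧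
    2 ≤ Fintype.card V ∧
    ∀ e ∈ F, ((SimpleGraph.fromEdgeSet (↑F : Set (Sym2 V))).deleteEdges {e}).Connected

/-- `D` is a 2-edge-cover of `G`: `D ⊆ E(G)` and every vertex is incident to at
least 2 edges of `D`. -/
def IsTwoEdgeCover {V : Type*} (G : SimpleGraph V) (D : Finset (Sym2 V)) : Prop :=
  (↑D : Set (Sym2 V)) ⊆ G.edgeSet ∧ ∀ v : V, 2 ≤ (D.filter (fun e => v ∈ e)).card

lemma exists_incident {V : Type*} {H : SimpleGraph V} (hH : H.Connected)
    {u v : V} (huv : u ≠ v) : ∃ e ∈ H.edgeSet, v ∈ e := by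
  obtain ⟨p⟩ := hH.preconnected v u
  cases p with
  | nil => exact absurd rfl huv.symm
  | cons h _ => exact ⟨_, h, Sym2.mem_mk_left _ _⟩

theorem stmt0 {V : Type*} [Fintype V]
    (G : SimpleGraph V) (hV : 3 ≤ Fintype.card V)
    (w : Sym2 V → ℕ) (hw : ∀ e ∈ G.edgeSet, w e ≤ 1)
    (D : Finset (Sym2 V)) (hD : IsTwoEdgeCover G D)
    (hDmin : ∀ D' : Finset (Sym2 V), IsTwoEdgeCover G D' → wt w D ≤ wt w D')
    (F : Finset (Sym2 V)) (hF : IsTwoECSS G F)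
    (L : Set V)
    (hL : ∀ v : V, v ∉ L → 2 ≤ (D.filter (fun e => v ∈ e ∧ ∀ x ∈ e, x ∉ L)).card) :
    wt w (D.filter (fun e => ∃ x ∈ e, x ∈ L)) ≤ wt w (F.filter (fun e => ∃ x ∈ e, x ∈ L)) := by
  classical
  obtain ⟨hFsub, hFconn, hV2, hFdel⟩ := hF
  -- every vertex has at least 2 incident edges in F
  have degF : ∀ v : V, 2 ≤ (F.filter (fun e => v ∈ e)).card := by
    intro v
    obtain ⟨u, hu⟩ := Fintype.exists_ne_of_one_lt_card (by omega) v
    obtain ⟨e1, he1, hve1⟩ := exists_incident hFconn hu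
    have he1F : e1 ∈ F := by
      rw [SimpleGraph.edgeSet_fromEdgeSet] at he1
      exact_mod_cast he1.1
    obtain ⟨e2, he2, hve2⟩ := exists_incident (hFdel e1 he1F) hu
    rw [SimpleGraph.edgeSet_deleteEdges, SimpleGraph.edgeSet_fromEdgeSet] at he2
    have he2F : e2 ∈ F := by exact_mod_cast he2.1.1
    have hne : e1 ≠ e2 := fun h => he2.2 (by simp [h])
    refine Finset.one_lt_card.mpr ⟨e1, ?_, e2, ?_, hne⟩
    · exact Finset.mem_filter.mpr ⟨he1F, hve1⟩
    · exact Finset.mem_filter.mpr ⟨he2F, hve2⟩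
  set B : Finset (Sym2 V) := D.filter (fun e => ¬ ∃ x ∈ e, x ∈ L) with hB
  set FL : Finset (Sym2 V) := F.filter (fun e => ∃ x ∈ e, x ∈ L) with hFL
  have hcover : IsTwoEdgeCover G (B ∪ FL) := by
    constructor
    · intro e he
      rcases Finset.mem_union.mp (by exact_mod_cast he) with h | h
      · exact hD.1 (by exact_mod_cast (Finset.mem_filter.mp h).1)
      · exact hFsub (by exact_mod_cast (Finset.mem_filter.mp h).1)
    · intro v
      by_cases hv : v ∈ L
      · refine le_trans (degF v) (Finset.card_le_card ?_)
        intro e he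
        obtain ⟨heF, hve⟩ := Finset.mem_filter.mp he
        exact Finset.mem_filter.mpr ⟨Finset.mem_union_right _
          (Finset.mem_filter.mpr ⟨heF, ⟨v, hve, hv⟩⟩), hve⟩
      · refine le_trans (hL v hv) (Finset.card_le_card ?_)
        intro e he
        obtain ⟨heD, hve, hall⟩ := Finset.mem_filter.mp he
        refine Finset.mem_filter.mpr ⟨Finset.mem_union_left _
          (Finset.mem_filter.mpr ⟨heD, ?_⟩), hve⟩
        rintro ⟨x, hxe, hxL⟩
        exact hall x hxe hxL
  have h1 : wt w D ≤ wt w (B ∪ FL) := hDmin _ hcover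
  have h2 : wt w (B ∪ FL) ≤ wt w B + wt w FL := by
    have : B ∪ FL = B ∪ (FL \ B) := by rw [Finset.union_sdiff_self_eq_union]
    rw [wt, this, Finset.sum_union Finset.disjoint_sdiff]
    exact add_le_add le_rfl (Finset.sum_le_sum_of_subset (Finset.sdiff_subset))
  have h3 : wt w (D.filter (fun e => ∃ x ∈ e, x ∈ L)) + wt w B = wt w D :=
    Finset.sum_filter_add_sum_filter_not D _ w
  omega
end

section
/- Let G be a finite simple 2-edge-connected graph with 0/1 edge weights whose zero-edges form a matching, and let K be a cycle in G containing exactly 3 unit-edges. Suppose that for every unit-edge e of K, at most one endpoint of e has a neighbor in V(G) \ V(K). Then every 2-edge-connected spanning subgraph of G contains at least 2 unit-edges both of whose endpoints lie in V(K). -/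
open scoped Classical

/-- A graph is 2-edge-connected: connected, ≥ 2 vertices, and no bridges. -/
def TwoEdgeConnected {V : Type*} [Fintype V] (G : SimpleGraph V) : Prop :=
  G.Connected ∧ 2 ≤ Fintype.card V ∧ ∀ e ∈ G.edgeSet, (G.deleteEdges {e}).Connected

/-- The zero-edges of `G` (w.r.t. weight `w`) form a matching: no two distinct
zero-edges share an endpoint. -/
def ZeroEdgesMatching {V : Type*} (G : SimpleGraph V) (w : Sym2 V → ℕ) : Prop :=
  ∀ e ∈ G.edgeSet, ∀ f ∈ G.edgeSet, w e = 0 → w f = 0 → e ≠ f → ∀ v : V, ¬(v ∈ e ∧ v ∈ f)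

namespace StmtAux

open SimpleGraph Walk

variable {V : Type*} {G : SimpleGraph V}

lemma path_filter_end : ∀ {a b : V} (q : G.Walk a b), q.IsPath → a ≠ b →
    (q.edges.filter (fun e => b ∈ e)).length = 1 := by
  intro a b q
  induction q with
  | nil => intro _ h; exact absurd rfl h
  | @cons u x w h' q' ih =>
    intro hp hne
    rw [Walk.edges_cons]
    by_cases hwx : w = x
    · subst hwx
      have hnil : q' = Walk.nil := (Walk.isPath_iff_eq_nil (p := q')).mp hp.of_cons
      subst hnil
      simp
    · rw [List.filter_cons_of_neg (by
        simp only [Sym2.mem_iff, decide_eq_true_eq, not_or]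
        exact ⟨fun h => hne h.symm, hwx⟩)]
      exact ih hp.of_cons (Ne.symm hwx)

lemma cycle_filter_start {u : V} (p : G.Walk u u) (hp : p.IsCycle) :
    (p.edges.filter (fun e => u ∈ e)).length = 2 := by
  obtain ⟨x, h, q, rfl⟩ := (Walk.not_nil_iff).mp hp.not_nil
  rw [Walk.cons_isCycle_iff] at hp
  rw [Walk.edges_cons, List.filter_cons_of_pos (by simp)]
  rw [List.length_cons, path_filter_end q hp.1 h.ne']

lemma cycle_filter {v u : V} (c : G.Walk v v) (hc : c.IsCycle) (hu : u ∈ c.support) :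
    (c.edges.filter (fun e => u ∈ e)).length = 2 := by
  have h1 := cycle_filter_start (c.rotate u hu) (hc.rotate hu)
  have h2 : ((c.rotate u hu).edges.filter (fun e => u ∈ e)).length
      = (c.edges.filter (fun e => u ∈ e)).length :=
    ((c.rotate_edges u hu).perm.filter _).length_eq
  omega

lemma cycle_incidence {v u : V} (c : G.Walk v v) (hc : c.IsCycle) (hu : u ∈ c.support) :
    ∃ g₁ g₂ : Sym2 V, g₁ ∈ c.edges ∧ g₂ ∈ c.edges ∧ g₁ ≠ g₂ ∧ u ∈ g₁ ∧ u ∈ g₂ ∧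
      ∀ e ∈ c.edges, u ∈ e → e = g₁ ∨ e = g₂ := by
  have hnd : (c.edges.filter (fun e => u ∈ e)).Nodup := hc.edges_nodup.filter _
  obtain ⟨g₁, g₂, hL⟩ := List.length_eq_two.mp (cycle_filter c hc hu)
  have hmem : ∀ e, e ∈ c.edges ∧ u ∈ e ↔ e = g₁ ∨ e = g₂ := by
    intro e
    constructor
    · rintro ⟨h1, h2⟩
      have he : e ∈ List.filter (fun e => decide (u ∈ e)) c.edges :=
        List.mem_filter.mpr ⟨h1, by simpa using h2⟩
      rw [hL] at he
      simpa using he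
    · intro h
      have he : e ∈ List.filter (fun e => decide (u ∈ e)) c.edges := by
        rw [hL]; simpa using h
      have h2 := List.mem_filter.mp he
      exact ⟨h2.1, by simpa using h2.2⟩
  rw [hL] at hnd
  have hne : g₁ ≠ g₂ := by simpa using hnd
  refine ⟨g₁, g₂, ((hmem g₁).mpr (Or.inl rfl)).1, ((hmem g₂).mpr (Or.inr rfl)).1, hne,
    ((hmem g₁).mpr (Or.inl rfl)).2, ((hmem g₂).mpr (Or.inr rfl)).2,
    fun e he hue => (hmem e).mp ⟨he, hue⟩⟩

/-- every vertex of a 2-ECSS is incident to two distinct edges of it. -/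
lemma two_edges_at {V : Type*} [Fintype V] {G : SimpleGraph V} {F : Finset (Sym2 V)}
    (hF : IsTwoECSS G F) (b : V) :
    ∃ e₁ e₂ : Sym2 V, e₁ ∈ F ∧ e₂ ∈ F ∧ e₁ ≠ e₂ ∧ b ∈ e₁ ∧ b ∈ e₂ := by
  obtain ⟨hsub, hconn, hcard, hdel⟩ := hF
  obtain ⟨a, ha⟩ := Fintype.exists_ne_of_one_lt_card (by omega) b
  obtain ⟨p⟩ := hconn.preconnected b a
  cases p with
  | nil => exact absurd rfl ha
  | @cons _ x _ h q =>
    rw [SimpleGraph.fromEdgeSet_adj] at h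
    have he₁F : s(b, x) ∈ F := h.1
    have hbx : b ≠ x := h.2
    obtain ⟨p'⟩ := (hdel s(b, x) he₁F).preconnected b x
    cases p' with
    | nil => exact absurd rfl hbx
    | @cons _ x' _ h' q' =>
      rw [SimpleGraph.deleteEdges_adj, SimpleGraph.fromEdgeSet_adj] at h'
      refine ⟨s(b, x), s(b, x'), he₁F, h'.1.1, ?_, Sym2.mem_mk_left b x, Sym2.mem_mk_left b x'⟩
      intro hcontra
      exact h'.2 (by rw [hcontra]; rfl)

end StmtAux

theorem stmt1 {V : Type*} [Fintype V]
    (G : SimpleGraph V) (w : Sym2 V → ℕ)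
    (hw : ∀ e ∈ G.edgeSet, w e ≤ 1) (hmatch : ZeroEdgesMatching G w)
    (hG : TwoEdgeConnected G)
    (v : V) (c : G.Walk v v) (hc : c.IsCycle)
    (h3 : (c.edges.filter (fun e => w e = 1)).length = 3)
    (hK : ∀ a b : V, s(a, b) ∈ c.edges → w s(a, b) = 1 →
      ¬((∃ x, x ∉ c.support ∧ G.Adj a x) ∧ (∃ y, y ∉ c.support ∧ G.Adj b y))) :
    ∀ F : Finset (Sym2 V), IsTwoECSS G F →
      2 ≤ (F.filter (fun e => w e = 1 ∧ ∀ x ∈ e, x ∈ c.support)).card := by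
  intro F hF
  by_contra hcard2
  push_neg at hcard2
  set S := F.filter (fun e => w e = 1 ∧ ∀ x ∈ e, x ∈ c.support) with hSdef
  have hS1 : ∀ g ∈ S, ∀ g' ∈ S, g = g' := Finset.card_le_one.mp (by omega)
  have hFsub := hF.1
  have hFedge : ∀ e ∈ F, e ∈ G.edgeSet := fun e he => hFsub (Finset.mem_coe.mpr he)
  have hLsub : ∀ e ∈ c.edges, e ∈ G.edgeSet := fun e he => c.edges_subset_edgeSet he
  -- each unit cycle edge has a "trapped" endpoint
  have htrapE : ∀ e, e ∈ c.edges → w e = 1 →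
      ∃ t, t ∈ e ∧ t ∈ c.support ∧ (∀ z, G.Adj t z → z ∈ c.support) := by
    intro e
    induction e using Sym2.ind with
    | _ a b =>
      intro he hwe
      have hk := hK a b he hwe
      by_cases h : ∃ x, x ∉ c.support ∧ G.Adj a x
      · refine ⟨b, Sym2.mem_mk_right a b, SimpleGraph.Walk.snd_mem_support_of_mem_edges c he, ?_⟩
        intro z hz
        by_contra hzs
        exact hk ⟨h, ⟨z, hzs, hz⟩⟩
      · refine ⟨a, Sym2.mem_mk_left a b, SimpleGraph.Walk.fst_mem_support_of_mem_edges c he, ?_⟩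
        intro z hz
        by_contra hzs
        exact h ⟨z, hzs, hz⟩
  -- a trapped support vertex is incident to a unit edge of F inside the cycle
  have hL2 : ∀ t, t ∈ c.support → (∀ z, G.Adj t z → z ∈ c.support) → ∃ f ∈ S, t ∈ f := by
    intro t hts htr
    obtain ⟨e₁, e₂, he₁, he₂, hne, ht1, ht2⟩ := StmtAux.two_edges_at hF t
    have hg1 := hFedge _ he₁
    have hg2 := hFedge _ he₂
    have key : ∀ e, e ∈ F → t ∈ e → w e = 1 → ∃ f ∈ S, t ∈ f := by
      intro e heF hte hwe
      refine ⟨e, Finset.mem_filter.mpr ⟨heF, hwe, ?_⟩, hte⟩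
      intro z hz
      obtain ⟨y', hey⟩ := Sym2.mem_iff_exists.mp hte
      subst hey
      have hadj : G.Adj t y' := (SimpleGraph.mem_edgeSet G).mp (hFedge _ heF)
      rcases Sym2.mem_iff.mp hz with rfl | rfl
      · exact hts
      · exact htr _ hadj
    rcases Nat.le_one_iff_eq_zero_or_eq_one.mp (hw e₁ hg1) with h1 | h1
    · rcases Nat.le_one_iff_eq_zero_or_eq_one.mp (hw e₂ hg2) with h2 | h2
      · exact absurd ⟨ht1, ht2⟩ (hmatch e₁ hg1 e₂ hg2 h1 h2 hne t)
      · exact key e₂ he₂ ht2 h2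
    · exact key e₁ he₁ ht1 h1
  -- the three unit cycle edges
  obtain ⟨E₁, E₂, E₃, hEL⟩ := List.length_eq_three.mp h3
  have hfilt_mem : ∀ e : Sym2 V, (e ∈ c.edges ∧ w e = 1) ↔ (e = E₁ ∨ e = E₂ ∨ e = E₃) := by
    intro e
    constructor
    · rintro ⟨h1, h2⟩
      have he : e ∈ c.edges.filter (fun e => w e = 1) := List.mem_filter.mpr ⟨h1, by simpa⟩
      rw [hEL] at he
      simpa using he
    · intro h
      have he : e ∈ c.edges.filter (fun e => w e = 1) := by rw [hEL]; simpa using h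
      have h2 := List.mem_filter.mp he
      exact ⟨h2.1, by simpa using h2.2⟩
  have hnd3 : E₁ ≠ E₂ ∧ E₁ ≠ E₃ ∧ E₂ ≠ E₃ := by
    have hnd : (c.edges.filter (fun e => w e = 1)).Nodup := hc.edges_nodup.filter _
    rw [hEL] at hnd
    simp only [List.nodup_cons, List.mem_cons, List.mem_singleton, List.nodup_nil] at hnd
    exact ⟨fun h => hnd.1 (Or.inl h), fun h => hnd.1 (Or.inr (Or.inl h)), fun h => hnd.2.1 (Or.inl h)⟩
  have hE₁ : E₁ ∈ c.edges ∧ w E₁ = 1 := (hfilt_mem E₁).mpr (Or.inl rfl)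
  -- S is nonempty, hence S = {f}
  obtain ⟨t₁, ht₁e, ht₁s, ht₁tr⟩ := htrapE E₁ hE₁.1 hE₁.2
  obtain ⟨f, hfS, ht₁f⟩ := hL2 t₁ ht₁s ht₁tr
  have hSf : ∀ g ∈ S, g = f := fun g hg => hS1 g hg f hfS
  have hfF : f ∈ F := (Finset.mem_filter.mp hfS).1
  have hfw : w f = 1 ∧ ∀ z ∈ f, z ∈ c.support := by
    have := (Finset.mem_filter.mp hfS).2
    exact this
  obtain ⟨y, hxy⟩ := Sym2.mem_iff_exists.mp f.out_fst_mem
  set x := f.out.1 with hxdef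
  have hxney : x ≠ y := by
    have := hFedge f hfF
    rw [hxy] at this
    exact ((SimpleGraph.mem_edgeSet G).mp this).ne
  have hxf : x ∈ f := f.out_fst_mem
  have hyf : y ∈ f := by rw [hxy]; exact Sym2.mem_mk_right x y
  have hxs : x ∈ c.support := hfw.2 x hxf
  have hys : y ∈ c.support := hfw.2 y hyf
  -- every unit cycle edge has a trapped endpoint equal to x or y
  have hC' : ∀ e, e ∈ c.edges → w e = 1 →
      ∃ t, t ∈ e ∧ (t = x ∨ t = y) ∧ (∀ z, G.Adj t z → z ∈ c.support) := by
    intro e he hwe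
    obtain ⟨t, hte, hts, htr⟩ := htrapE e he hwe
    obtain ⟨f', hf'S, htf'⟩ := hL2 t hts htr
    rw [hSf f' hf'S, hxy] at htf'
    exact ⟨t, hte, Sym2.mem_iff.mp htf', htr⟩
  have hC : ∀ e, e ∈ c.edges → w e = 1 → x ∈ e ∨ y ∈ e := by
    intro e he hwe
    obtain ⟨t, hte, ht, _⟩ := hC' e he hwe
    rcases ht with rfl | rfl
    · exact Or.inl hte
    · exact Or.inr hte
  -- pigeonhole helper: three distinct edges cannot all pass through one vertex
  have hpigeon : ∀ u : V, u ∈ c.support → u ∈ E₁ → u ∈ E₂ → u ∈ E₃ → False := by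
    intro u hus h1 h2 h3'
    obtain ⟨g₁, g₂, _, _, hgne, _, _, huniq⟩ := StmtAux.cycle_incidence c hc hus
    have k1 := huniq E₁ hE₁.1 h1
    have k2 := huniq E₂ ((hfilt_mem E₂).mpr (Or.inr (Or.inl rfl))).1 h2
    have k3 := huniq E₃ ((hfilt_mem E₃).mpr (Or.inr (Or.inr rfl))).1 h3'
    rcases k1 with h1' | h1' <;> rcases k2 with h2' | h2' <;> rcases k3 with h3'' | h3'' <;>
      first
        | exact hnd3.1 (h1'.trans h2'.symm)
        | exact hnd3.2.1 (h1'.trans h3''.symm)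
        | exact hnd3.2.2 (h2'.trans h3''.symm)
  -- x and y are both trapped
  have hxtr : ∀ z, G.Adj x z → z ∈ c.support := by
    by_contra hxtr
    push_neg at hxtr
    obtain ⟨z, hz1, hz2⟩ := hxtr
    have hy3 : ∀ e, (e = E₁ ∨ e = E₂ ∨ e = E₃) → y ∈ e := by
      intro e hmem
      have hce := (hfilt_mem e).mpr hmem
      obtain ⟨t, hte, ht, htr⟩ := hC' e hce.1 hce.2
      rcases ht with rfl | rfl
      · exact absurd (htr z hz1) hz2
      · exact hte
    exact hpigeon y hys (hy3 E₁ (Or.inl rfl)) (hy3 E₂ (Or.inr (Or.inl rfl)))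
      (hy3 E₃ (Or.inr (Or.inr rfl)))
  have hytr : ∀ z, G.Adj y z → z ∈ c.support := by
    by_contra hytr
    push_neg at hytr
    obtain ⟨z, hz1, hz2⟩ := hytr
    have hx3 : ∀ e, (e = E₁ ∨ e = E₂ ∨ e = E₃) → x ∈ e := by
      intro e hmem
      have hce := (hfilt_mem e).mpr hmem
      obtain ⟨t, hte, ht, htr⟩ := hC' e hce.1 hce.2
      rcases ht with rfl | rfl
      · exact hte
      · exact absurd (htr z hz1) hz2
    exact hpigeon x hxs (hx3 E₁ (Or.inl rfl)) (hx3 E₂ (Or.inr (Or.inl rfl)))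
      (hx3 E₃ (Or.inr (Or.inr rfl)))
  -- trapped endpoints of f have a zero F-edge, which must be a cycle edge
  have hzero : ∀ t, t ∈ c.support → (∀ z, G.Adj t z → z ∈ c.support) →
      ∃ p, s(t, p) ∈ F ∧ w s(t, p) = 0 ∧ p ∈ c.support ∧ p ≠ t := by
    intro t hts htr
    obtain ⟨e₁, e₂, he₁, he₂, hne, ht1, ht2⟩ := StmtAux.two_edges_at hF t
    have hunit : ∀ e, e ∈ F → t ∈ e → w e = 1 → e = f := by
      intro e heF hte hwe
      apply hSf
      refine Finset.mem_filter.mpr ⟨heF, hwe, ?_⟩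
      intro z hz
      obtain ⟨y', hey⟩ := Sym2.mem_iff_exists.mp hte
      subst hey
      have hadj : G.Adj t y' := (SimpleGraph.mem_edgeSet G).mp (hFedge _ heF)
      rcases Sym2.mem_iff.mp hz with rfl | rfl
      · exact hts
      · exact htr _ hadj
    have hzero' : w e₁ = 0 ∨ w e₂ = 0 := by
      by_contra hh
      push_neg at hh
      have h1 : w e₁ = 1 := by
        rcases Nat.le_one_iff_eq_zero_or_eq_one.mp (hw _ (hFedge _ he₁)) with h | h
        · exact absurd h hh.1
        · exact h
      have h2 : w e₂ = 1 := by
        rcases Nat.le_one_iff_eq_zero_or_eq_one.mp (hw _ (hFedge _ he₂)) with h | h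
        · exact absurd h hh.2
        · exact h
      exact hne ((hunit e₁ he₁ ht1 h1).trans (hunit e₂ he₂ ht2 h2).symm)
    obtain ⟨e, heF, hte, hwe⟩ : ∃ e, e ∈ F ∧ t ∈ e ∧ w e = 0 := by
      rcases hzero' with h | h
      · exact ⟨e₁, he₁, ht1, h⟩
      · exact ⟨e₂, he₂, ht2, h⟩
    obtain ⟨p, hep⟩ := Sym2.mem_iff_exists.mp hte
    subst hep
    have hadj : G.Adj t p := (SimpleGraph.mem_edgeSet G).mp (hFedge _ heF)
    exact ⟨p, heF, hwe, htr _ hadj, hadj.ne'⟩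
  obtain ⟨p, hpF, hpw, hps, hpx⟩ := hzero x hxs hxtr
  obtain ⟨q, hqF, hqw, hqs, hqy⟩ := hzero y hys hytr
  have hpy : p ≠ y := by
    intro h
    rw [h, ← hxy] at hpw
    omega
  have hqx : q ≠ x := by
    intro h
    rw [h] at hqw
    have : s(y, x) = f := by rw [hxy, Sym2.eq_swap]
    rw [this] at hqw
    omega
  -- the zero edge from a trapped endpoint of f is a cycle edge
  have hcycz : ∀ t p', (t = x ∨ t = y) → s(t, p') ∈ F → w s(t, p') = 0 → p' ∈ c.support →
      p' ≠ x → p' ≠ y → s(t, p') ∈ c.edges := by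
    intro t p' ht hpF' hpw' hps' hp'x hp'y
    obtain ⟨g₁, g₂, hg₁c, hg₂c, hgne, hpg₁, hpg₂, huniq⟩ := StmtAux.cycle_incidence c hc hps'
    have hkey : ∀ g, g ∈ c.edges → p' ∈ g → w g = 0 → g = s(t, p') := by
      intro g hgc hpg hg0
      by_contra hne'
      exact hmatch g (hLsub g hgc) s(t, p') (hFedge _ hpF') hg0 hpw' hne' p'
        ⟨hpg, Sym2.mem_mk_right t p'⟩
    have hgform : ∀ g, g ∈ c.edges → p' ∈ g → w g = 1 → g = s(p', x) ∨ g = s(p', y) := by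
      intro g hgc hpg hg1
      obtain ⟨r, hgr⟩ := Sym2.mem_iff_exists.mp hpg
      subst hgr
      rcases hC _ hgc hg1 with hx | hy
      · left
        rcases Sym2.mem_iff.mp hx with h | h
        · exact absurd h.symm hp'x
        · rw [h]
      · right
        rcases Sym2.mem_iff.mp hy with h | h
        · exact absurd h.symm hp'y
        · rw [h]
    by_cases h₁ : w g₁ = 0
    · rw [← hkey g₁ hg₁c hpg₁ h₁]; exact hg₁c
    by_cases h₂ : w g₂ = 0
    · rw [← hkey g₂ hg₂c hpg₂ h₂]; exact hg₂c
    exfalso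
    have hu₁ : w g₁ = 1 := by
      rcases Nat.le_one_iff_eq_zero_or_eq_one.mp (hw _ (hLsub _ hg₁c)) with h | h
      · exact absurd h h₁
      · exact h
    have hu₂ : w g₂ = 1 := by
      rcases Nat.le_one_iff_eq_zero_or_eq_one.mp (hw _ (hLsub _ hg₂c)) with h | h
      · exact absurd h h₂
      · exact h
    have hswap : w s(p', t) = 0 := by rw [Sym2.eq_swap]; exact hpw'
    have hg1' := hgform g₁ hg₁c hpg₁ hu₁
    have hg2' := hgform g₂ hg₂c hpg₂ hu₂
    rcases ht with rfl | rfl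
    · rcases hg1' with h | h
      · rw [h] at hu₁; omega
      rcases hg2' with h' | h'
      · rw [h'] at hu₂; omega
      · exact hgne (h.trans h'.symm)
    · rcases hg1' with h | h
      swap
      · rw [h] at hu₁; omega
      rcases hg2' with h' | h'
      swap
      · rw [h'] at hu₂; omega
      · exact hgne (h.trans h'.symm)
  have hpc : s(x, p) ∈ c.edges := hcycz x p (Or.inl rfl) hpF hpw hps hpx hpy
  have hqc : s(y, q) ∈ c.edges := hcycz y q (Or.inr rfl) hqF hqw hqs hqx hqy
  -- x lies on at most one unit cycle edge
  have hgxex : ∃ gx, ∀ e, e ∈ c.edges → w e = 1 → x ∈ e → e = gx := by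
    obtain ⟨a₁, a₂, ha₁c, ha₂c, hane, hxa₁, hxa₂, huniq⟩ := StmtAux.cycle_incidence c hc hxs
    rcases huniq _ hpc (Sym2.mem_mk_left x p) with h | h
    · refine ⟨a₂, fun e hec hwe hxe => ?_⟩
      rcases huniq e hec hxe with rfl | rfl
      · rw [← h] at hwe; omega
      · rfl
    · refine ⟨a₁, fun e hec hwe hxe => ?_⟩
      rcases huniq e hec hxe with rfl | rfl
      · rfl
      · rw [← h] at hwe; omega
  have hgyex : ∃ gy, ∀ e, e ∈ c.edges → w e = 1 → y ∈ e → e = gy := by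
    obtain ⟨a₁, a₂, ha₁c, ha₂c, hane, hya₁, hya₂, huniq⟩ := StmtAux.cycle_incidence c hc hys
    rcases huniq _ hqc (Sym2.mem_mk_left y q) with h | h
    · refine ⟨a₂, fun e hec hwe hye => ?_⟩
      rcases huniq e hec hye with rfl | rfl
      · rw [← h] at hwe; omega
      · rfl
    · refine ⟨a₁, fun e hec hwe hye => ?_⟩
      rcases huniq e hec hye with rfl | rfl
      · rfl
      · rw [← h] at hwe; omega
  obtain ⟨gx, hgx⟩ := hgxex
  obtain ⟨gy, hgy⟩ := hgyex
  have hfinal : ∀ e, (e = E₁ ∨ e = E₂ ∨ e = E₃) → e = gx ∨ e = gy := by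
    intro e hmem
    have hce := (hfilt_mem e).mpr hmem
    rcases hC e hce.1 hce.2 with hx | hy
    · exact Or.inl (hgx e hce.1 hce.2 hx)
    · exact Or.inr (hgy e hce.1 hce.2 hy)
  rcases hfinal E₁ (Or.inl rfl) with h1 | h1 <;>
    rcases hfinal E₂ (Or.inr (Or.inl rfl)) with h2 | h2 <;>
      rcases hfinal E₃ (Or.inr (Or.inr rfl)) with h3' | h3' <;>
        first
          | exact hnd3.1 (h1.trans h2.symm)
          | exact hnd3.2.1 (h1.trans h3'.symm)
          | exact hnd3.2.2 (h2.trans h3'.symm)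
end

section
/- Let G be a finite simple 2-edge-connected graph with 0/1 edge weights whose zero-edges form a matching. Let C ⊆ V(G) with |C| ∈ {3, 4} be such that the induced subgraph G[C] contains a Hamiltonian cycle having exactly 2 unit-edges. Suppose there is no Hamiltonian path P of G[C] containing exactly one unit-edge such that both endpoints of P have a neighbor in V(G) \ C. Then every 2-edge-connected spanning subgraph of G contains at least 2 unit-edges both of whose endpoints lie in C. -/
open scoped Classical

open SimpleGraph

lemma exists_adj_conn {V : Type*} [Fintype V] (H : SimpleGraph V) (h : H.Connected)
    (hcard : 2 ≤ Fintype.card V) (v : V) : ∃ u, H.Adj v u := by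
  obtain ⟨u, hu⟩ := Fintype.exists_ne_of_one_lt_card (by omega) v
  obtain ⟨p⟩ := h.preconnected v u
  cases p with
  | nil => exact absurd rfl hu.symm
  | cons h' _ => exact ⟨_, h'⟩

lemma two_edges {V : Type*} [Fintype V] {G : SimpleGraph V} {F : Finset (Sym2 V)}
    (hF : IsTwoECSS G F) (v : V) :
    ∃ e1 e2, e1 ∈ F ∧ e2 ∈ F ∧ e1 ≠ e2 ∧ v ∈ e1 ∧ v ∈ e2 := by
  obtain ⟨hsub, hconn, hcard, hdel⟩ := hF
  obtain ⟨u, hu⟩ := exists_adj_conn _ hconn hcard v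
  rw [fromEdgeSet_adj] at hu
  obtain ⟨u2, hu2⟩ := exists_adj_conn _ (hdel _ hu.1) hcard v
  rw [deleteEdges_adj, fromEdgeSet_adj] at hu2
  refine ⟨s(v,u), s(v,u2), hu.1, hu2.1.1, ?_, Sym2.mem_mk_left .., Sym2.mem_mk_left ..⟩
  intro hh
  exact hu2.2 (by simp [hh])

lemma bad_edges {V : Type*} [Fintype V] {G : SimpleGraph V} {F : Finset (Sym2 V)}
    (hF : IsTwoECSS G F) (v : V) :
    ∃ x1 x2, x1 ≠ x2 ∧ G.Adj v x1 ∧ G.Adj v x2 ∧ s(v,x1) ∈ F ∧ s(v,x2) ∈ F := by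
  obtain ⟨e1, e2, h1, h2, hne, hv1, hv2⟩ := two_edges hF v
  have ha1 : e1 ∈ G.edgeSet := hF.1 h1
  have ha2 : e2 ∈ G.edgeSet := hF.1 h2
  obtain ⟨x1, rfl⟩ := Sym2.mem_iff_exists.mp hv1
  obtain ⟨x2, rfl⟩ := Sym2.mem_iff_exists.mp hv2
  rw [SimpleGraph.mem_edgeSet] at ha1 ha2
  refine ⟨x1, x2, ?_, ha1, ha2, h1, h2⟩
  rintro rfl; exact hne rfl

lemma conclude {V : Type*} [Fintype V] [DecidableEq V] (w : Sym2 V → ℕ) (C : Finset V)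
    (F : Finset (Sym2 V)) (e1 e2 : Sym2 V) (h1 : e1 ∈ F) (h2 : e2 ∈ F) (hne : e1 ≠ e2)
    (u1 : w e1 = 1) (u2 : w e2 = 1) (c1 : ∀ x ∈ e1, x ∈ C) (c2 : ∀ x ∈ e2, x ∈ C) :
    2 ≤ (F.filter (fun e => w e = 1 ∧ ∀ x ∈ e, x ∈ C)).card :=
  Finset.one_lt_card.mpr ⟨e1, Finset.mem_filter.mpr ⟨h1, u1, c1⟩,
    e2, Finset.mem_filter.mpr ⟨h2, u2, c2⟩, hne⟩

lemma tri_case {V : Type*} [Fintype V] [DecidableEq V]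
    (G : SimpleGraph V) (w : Sym2 V → ℕ) (C : Finset V)
    (hpath : ¬ ∃ (a b : V) (p : G.Walk a b), p.IsPath ∧ (∀ u : V, u ∈ p.support ↔ u ∈ C) ∧
      (p.edges.filter (fun e => w e = 1)).length = 1 ∧
      (∃ x, x ∉ C ∧ G.Adj a x) ∧ (∃ y, y ∉ C ∧ G.Adj b y))
    (a b c : V) (hab : G.Adj a b) (hbc : G.Adj b c) (hca : G.Adj c a)
    (wab : w s(a,b) = 0) (wbc : w s(b,c) = 1) (wca : w s(c,a) = 1)
    (hCset : ∀ u, u ∈ C ↔ u = a ∨ u = b ∨ u = c)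
    (F : Finset (Sym2 V)) (hF : IsTwoECSS G F) :
    2 ≤ (F.filter (fun e => w e = 1 ∧ ∀ x ∈ e, x ∈ C)).card := by
  have hnab := hab.ne
  have hnbc := hbc.ne
  have hnca := hca.ne
  by_cases hGc : ∃ x, x ∉ C ∧ G.Adj c x
  · -- c has an outside neighbor; then a and b are bad
    have hNa : ¬ ∃ x, x ∉ C ∧ G.Adj a x := by
      intro hGa
      refine hpath ⟨a, c, Walk.cons hab (Walk.cons hbc .nil), ?_, ?_, ?_, hGa, hGc⟩
      · simp [Walk.isPath_def, hnab, hnbc, Ne.symm hnca]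
      · intro u; simp [hCset u]; try tauto
      · simp [Walk.edges_cons, List.filter_cons, wab, wbc]
    have hNb : ¬ ∃ x, x ∉ C ∧ G.Adj b x := by
      intro hGb
      refine hpath ⟨b, c, Walk.cons hab.symm (Walk.cons hca.symm .nil), ?_, ?_, ?_, hGb, hGc⟩
      · simp [Walk.isPath_def, hnab, hnbc, Ne.symm hnca, Ne.symm hnab]
      · intro u; simp [hCset u]; try tauto
      · have e1 : s(b,a) = s(a,b) := Sym2.eq_swap
        have e2 : s(a,c) = s(c,a) := Sym2.eq_swap
        simp [Walk.edges_cons, List.filter_cons, e1, e2, wab, wca]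
    push_neg at hNa hNb
    -- a is bad : get s(a,c) ∈ F
    have haF : s(a,c) ∈ F := by
      obtain ⟨x1, x2, hx12, had1, had2, hf1, hf2⟩ := bad_edges hF a
      have m1 : x1 ∈ C := by by_contra hh; exact hNa x1 hh had1
      have m2 : x2 ∈ C := by by_contra hh; exact hNa x2 hh had2
      rw [hCset] at m1 m2
      rcases m1 with rfl | rfl | rfl
      · exact absurd rfl had1.ne
      · rcases m2 with rfl | rfl | rfl
        · exact absurd rfl had2.ne
        · exact absurd rfl hx12
        · exact hf2
      · exact hf1
    have hbF : s(b,c) ∈ F := by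
      obtain ⟨x1, x2, hx12, had1, had2, hf1, hf2⟩ := bad_edges hF b
      have m1 : x1 ∈ C := by by_contra hh; exact hNb x1 hh had1
      have m2 : x2 ∈ C := by by_contra hh; exact hNb x2 hh had2
      rw [hCset] at m1 m2
      rcases m1 with rfl | rfl | rfl
      · rcases m2 with rfl | rfl | rfl
        · exact absurd rfl hx12
        · exact absurd rfl had2.ne
        · exact hf2
      · exact absurd rfl had1.ne
      · exact hf1
    refine conclude w C F s(a,c) s(b,c) haF hbF ?_ ?_ ?_ ?_ ?_
    · intro h
      exact hnab (Sym2.congr_left.mp h)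
    · rw [Sym2.eq_swap]; exact wca
    · exact wbc
    · intro x hx; rw [hCset]; rcases Sym2.mem_iff.mp hx with rfl | rfl <;> tauto
    · intro x hx; rw [hCset]; rcases Sym2.mem_iff.mp hx with rfl | rfl <;> tauto
  · -- c is bad : both s(c,a) and s(c,b) ∈ F
    push_neg at hGc
    obtain ⟨x1, x2, hx12, had1, had2, hf1, hf2⟩ := bad_edges hF c
    have m1 : x1 ∈ C := by by_contra hh; exact hGc x1 hh had1
    have m2 : x2 ∈ C := by by_contra hh; exact hGc x2 hh had2
    rw [hCset] at m1 m2
    have key : (s(c,a) ∈ F ∧ s(c,b) ∈ F) := by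
      rcases m1 with rfl | rfl | rfl
      · rcases m2 with rfl | rfl | rfl
        · exact absurd rfl hx12
        · exact ⟨hf1, hf2⟩
        · exact absurd rfl had2.ne
      · rcases m2 with rfl | rfl | rfl
        · exact ⟨hf2, hf1⟩
        · exact absurd rfl hx12
        · exact absurd rfl had2.ne
      · exact absurd rfl had1.ne
    refine conclude w C F s(c,a) s(c,b) key.1 key.2 ?_ wca ?_ ?_ ?_
    · intro h
      exact hnab (Sym2.congr_right.mp h)
    · rw [Sym2.eq_swap]; exact wbc
    · intro x hx; rw [hCset]; rcases Sym2.mem_iff.mp hx with rfl | rfl <;> tauto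
    · intro x hx; rw [hCset]; rcases Sym2.mem_iff.mp hx with rfl | rfl <;> tauto

lemma ext_gen {V : Type*} [Fintype V] {G : SimpleGraph V} {F : Finset (Sym2 V)}
    (hF : IsTwoECSS G F) {C : Finset V} (v p q r : V)
    (hmem : ∀ x, x ∈ C ↔ x = v ∨ x = p ∨ x = q ∨ x = r)
    (hbad : ∀ x, G.Adj v x → x ∈ C) :
    (s(v,q) ∈ F ∧ G.Adj v q) ∨ (s(v,r) ∈ F ∧ G.Adj v r) := by
  obtain ⟨x1, x2, h12, ad1, ad2, f1, f2⟩ := bad_edges hF v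
  have m1 := (hmem x1).mp (hbad _ ad1)
  have m2 := (hmem x2).mp (hbad _ ad2)
  rcases m1 with rfl | rfl | rfl | rfl
  · exact absurd rfl ad1.ne
  · rcases m2 with rfl | rfl | rfl | rfl
    · exact absurd rfl ad2.ne
    · exact absurd rfl h12
    · exact Or.inl ⟨f2, ad2⟩
    · exact Or.inr ⟨f2, ad2⟩
  · exact Or.inl ⟨f1, ad1⟩
  · exact Or.inr ⟨f1, ad1⟩


lemma mk_path4 {V : Type*} [Fintype V] [DecidableEq V]
    (G : SimpleGraph V) (w : Sym2 V → ℕ) (C : Finset V)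
    (a b c d : V) (h1 : G.Adj a b) (h2 : G.Adj b c) (h3 : G.Adj c d)
    (nab : a ≠ b) (nac : a ≠ c) (nad : a ≠ d) (nbc : b ≠ c) (nbd : b ≠ d) (ncd : c ≠ d)
    (w1 : w s(a,b) = 0) (w2 : w s(b,c) = 1) (w3 : w s(c,d) = 0)
    (hCset : ∀ u, u ∈ C ↔ u = a ∨ u = b ∨ u = c ∨ u = d)
    (ga : ∃ x, x ∉ C ∧ G.Adj a x) (gd : ∃ x, x ∉ C ∧ G.Adj d x) :
    ∃ (x y : V) (p : G.Walk x y), p.IsPath ∧ (∀ u : V, u ∈ p.support ↔ u ∈ C) ∧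
      (p.edges.filter (fun e => w e = 1)).length = 1 ∧
      (∃ x', x' ∉ C ∧ G.Adj x x') ∧ (∃ y', y' ∉ C ∧ G.Adj y y') := by
  refine ⟨a, d, Walk.cons h1 (Walk.cons h2 (Walk.cons h3 .nil)), ?_, ?_, ?_, ga, gd⟩
  · simp [Walk.isPath_def, nab, nac, nad, nbc, nbd, ncd,
      Ne.symm nab, Ne.symm nac, Ne.symm nad, Ne.symm nbc, Ne.symm nbd, Ne.symm ncd]
  · intro u; simp [hCset u]; try tauto
  · simp [Walk.edges_cons, List.filter_cons, w1, w2, w3]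

set_option maxHeartbeats 2000000 in
lemma quad_case {V : Type*} [Fintype V] [DecidableEq V]
    (G : SimpleGraph V) (w : Sym2 V → ℕ) (C : Finset V)
    (hw : ∀ e ∈ G.edgeSet, w e ≤ 1)
    (hmatch : ∀ e ∈ G.edgeSet, ∀ f ∈ G.edgeSet, w e = 0 → w f = 0 → e ≠ f →
      ∀ v : V, ¬(v ∈ e ∧ v ∈ f))
    (hpath : ¬ ∃ (a b : V) (p : G.Walk a b), p.IsPath ∧ (∀ u : V, u ∈ p.support ↔ u ∈ C) ∧
      (p.edges.filter (fun e => w e = 1)).length = 1 ∧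
      (∃ x, x ∉ C ∧ G.Adj a x) ∧ (∃ y, y ∉ C ∧ G.Adj b y))
    (a b c d : V) (hab : G.Adj a b) (hbc : G.Adj b c) (hcd : G.Adj c d) (hda : G.Adj d a)
    (hac : a ≠ c) (hbd : b ≠ d)
    (wab : w s(a,b) = 0) (wbc : w s(b,c) = 1) (wcd : w s(c,d) = 0) (wda : w s(d,a) = 1)
    (hCset : ∀ u, u ∈ C ↔ u = a ∨ u = b ∨ u = c ∨ u = d)
    (F : Finset (Sym2 V)) (hF : IsTwoECSS G F) :
    2 ≤ (F.filter (fun e => w e = 1 ∧ ∀ x ∈ e, x ∈ C)).card := by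
  have hnab := hab.ne
  have hnbc := hbc.ne
  have hncd := hcd.ne
  have hnda := hda.ne
  have mA : a ∈ C := (hCset a).mpr (Or.inl rfl)
  have mB : b ∈ C := (hCset b).mpr (Or.inr (Or.inl rfl))
  have mC : c ∈ C := (hCset c).mpr (Or.inr (Or.inr (Or.inl rfl)))
  have mD : d ∈ C := (hCset d).mpr (Or.inr (Or.inr (Or.inr rfl)))
  have memS : ∀ u v : V, u ∈ C → v ∈ C → ∀ x ∈ s(u,v), x ∈ C := by
    intro u v hu hv x hx
    rcases Sym2.mem_iff.mp hx with rfl | rfl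
    exacts [hu, hv]
  -- weights of chords
  have wAC : G.Adj a c → w s(a,c) = 1 := by
    intro h
    have h1 : w s(a,c) ≤ 1 := hw _ (G.mem_edgeSet.mpr h)
    have h0 : w s(a,c) ≠ 0 := by
      intro h0
      exact hmatch s(a,b) (G.mem_edgeSet.mpr hab) s(a,c) (G.mem_edgeSet.mpr h) wab h0
        (by clear * - hnab hnbc hncd hnda hac hbd; rw [ne_eq, Sym2.eq_iff]; tauto) a ⟨Sym2.mem_mk_left .., Sym2.mem_mk_left ..⟩
    omega
  have wBD : G.Adj b d → w s(b,d) = 1 := by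
    intro h
    have h1 : w s(b,d) ≤ 1 := hw _ (G.mem_edgeSet.mpr h)
    have h0 : w s(b,d) ≠ 0 := by
      intro h0
      exact hmatch s(a,b) (G.mem_edgeSet.mpr hab) s(b,d) (G.mem_edgeSet.mpr h) wab h0
        (by clear * - hnab hnbc hncd hnda hac hbd; rw [ne_eq, Sym2.eq_iff]; tauto) b ⟨Sym2.mem_mk_right .., Sym2.mem_mk_left ..⟩
    omega
  -- forbidden paths
  have pathAD : (∃ x, x ∉ C ∧ G.Adj a x) → (∃ x, x ∉ C ∧ G.Adj d x) → False :=
    fun ga gd => hpath (mk_path4 G w C a b c d hab hbc hcd hnab hac (Ne.symm hnda) hnbc hbd hncd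
      wab wbc wcd hCset ga gd)
  have pathCB : (∃ x, x ∉ C ∧ G.Adj c x) → (∃ x, x ∉ C ∧ G.Adj b x) → False :=
    fun gc gb => hpath (mk_path4 G w C c d a b hcd hda hab hncd (Ne.symm hac) (Ne.symm hnbc)
      hnda (Ne.symm hbd) hnab wcd wda wab
      (fun u => by clear * - hCset; rw [hCset u]; constructor <;> rintro (rfl|rfl|rfl|rfl) <;> simp) gc gb)
  have pathBD : G.Adj a c → (∃ x, x ∉ C ∧ G.Adj b x) → (∃ x, x ∉ C ∧ G.Adj d x) → False :=
    fun hadj gb gd => hpath (mk_path4 G w C b a c d hab.symm hadj hcd (Ne.symm hnab) hnbc hbd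
      hac (Ne.symm hnda) hncd (by rw [Sym2.eq_swap]; exact wab) (wAC hadj) wcd
      (fun u => by clear * - hCset; rw [hCset u]; constructor <;> rintro (rfl|rfl|rfl|rfl) <;> simp) gb gd)
  have pathAC : G.Adj b d → (∃ x, x ∉ C ∧ G.Adj a x) → (∃ x, x ∉ C ∧ G.Adj c x) → False :=
    fun hadj ga gc => hpath (mk_path4 G w C a b d c hab hadj hcd.symm hnab (Ne.symm hnda) hac
      hbd hnbc (Ne.symm hncd) wab (wBD hadj) (by rw [Sym2.eq_swap]; exact wcd)
      (fun u => by clear * - hCset; rw [hCset u]; constructor <;> rintro (rfl|rfl|rfl|rfl) <;> simp) ga gc)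
  -- badness derivations
  have badAD : (∀ x, G.Adj a x → x ∈ C) ∨ (∀ x, G.Adj d x → x ∈ C) := by
    by_contra h
    push_neg at h
    obtain ⟨⟨x, hx1, hx2⟩, ⟨y, hy1, hy2⟩⟩ := h
    exact pathAD ⟨x, hx2, hx1⟩ ⟨y, hy2, hy1⟩
  have badCB : (∀ x, G.Adj c x → x ∈ C) ∨ (∀ x, G.Adj b x → x ∈ C) := by
    by_contra h
    push_neg at h
    obtain ⟨⟨x, hx1, hx2⟩, ⟨y, hy1, hy2⟩⟩ := h
    exact pathCB ⟨x, hx2, hx1⟩ ⟨y, hy2, hy1⟩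
  -- extraction per vertex
  have extA := fun hb => ext_gen hF a b c d (fun x => by rw [hCset x]) hb
  have extB := fun hb => ext_gen hF b a d c (fun x => by clear * - hCset; rw [hCset x]; constructor <;> rintro (rfl|rfl|rfl|rfl) <;> simp) hb
  have extC := fun hb => ext_gen hF c d a b (fun x => by clear * - hCset; rw [hCset x]; constructor <;> rintro (rfl|rfl|rfl|rfl) <;> simp) hb
  have extD := fun hb => ext_gen hF d c b a (fun x => by clear * - hCset; rw [hCset x]; constructor <;> rintro (rfl|rfl|rfl|rfl) <;> simp) hb
  -- weights of candidate edges
  have wad : w s(a,d) = 1 := by rw [Sym2.eq_swap]; exact wda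
  have wcb : w s(c,b) = 1 := by rw [Sym2.eq_swap]; exact wbc
  have wdb : G.Adj d b → w s(d,b) = 1 := fun h => by rw [Sym2.eq_swap]; exact wBD h.symm
  have wca : G.Adj c a → w s(c,a) = 1 := fun h => by rw [Sym2.eq_swap]; exact wAC h.symm
  rcases badAD with hbA | hbD
  · rcases badCB with hbC | hbB
    · -- Bad a, Bad c
      rcases extA hbA with ⟨f1, adj1⟩ | ⟨f1, adj1⟩
      · rcases extC hbC with ⟨f2, adj2⟩ | ⟨f2, adj2⟩
        · -- s(a,c) and s(c,a): same edge; use pathBD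
          have badBD2 : (∀ x, G.Adj b x → x ∈ C) ∨ (∀ x, G.Adj d x → x ∈ C) := by
            by_contra h
            push_neg at h
            obtain ⟨⟨x, hx1, hx2⟩, ⟨y, hy1, hy2⟩⟩ := h
            exact pathBD adj1 ⟨x, hx2, hx1⟩ ⟨y, hy2, hy1⟩
          rcases badBD2 with hbB | hbD
          · rcases extB hbB with ⟨f3, adj3⟩ | ⟨f3, adj3⟩
            · exact conclude w C F s(a,c) s(b,d) f1 f3
                (by clear * - hnab hnbc hncd hnda hac hbd; rw [ne_eq, Sym2.eq_iff]; tauto) (wAC adj1) (wBD adj3)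
                (memS _ _ mA mC) (memS _ _ mB mD)
            · exact conclude w C F s(a,c) s(b,c) f1 f3
                (by clear * - hnab hnbc hncd hnda hac hbd; rw [ne_eq, Sym2.eq_iff]; tauto) (wAC adj1) wbc
                (memS _ _ mA mC) (memS _ _ mB mC)
          · rcases extD hbD with ⟨f3, adj3⟩ | ⟨f3, adj3⟩
            · exact conclude w C F s(a,c) s(d,b) f1 f3
                (by clear * - hnab hnbc hncd hnda hac hbd; rw [ne_eq, Sym2.eq_iff]; tauto) (wAC adj1) (wdb adj3)
                (memS _ _ mA mC) (memS _ _ mD mB)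
            · exact conclude w C F s(a,c) s(d,a) f1 f3
                (by clear * - hnab hnbc hncd hnda hac hbd; rw [ne_eq, Sym2.eq_iff]; tauto) (wAC adj1) wda
                (memS _ _ mA mC) (memS _ _ mD mA)
        · exact conclude w C F s(a,c) s(c,b) f1 f2
            (by clear * - hnab hnbc hncd hnda hac hbd; rw [ne_eq, Sym2.eq_iff]; tauto) (wAC adj1) wcb
            (memS _ _ mA mC) (memS _ _ mC mB)
      · rcases extC hbC with ⟨f2, adj2⟩ | ⟨f2, adj2⟩
        · exact conclude w C F s(a,d) s(c,a) f1 f2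
            (by clear * - hnab hnbc hncd hnda hac hbd; rw [ne_eq, Sym2.eq_iff]; tauto) wad (wca adj2)
            (memS _ _ mA mD) (memS _ _ mC mA)
        · exact conclude w C F s(a,d) s(c,b) f1 f2
            (by clear * - hnab hnbc hncd hnda hac hbd; rw [ne_eq, Sym2.eq_iff]; tauto) wad wcb
            (memS _ _ mA mD) (memS _ _ mC mB)
    · -- Bad a, Bad b
      rcases extA hbA with ⟨f1, adj1⟩ | ⟨f1, adj1⟩ <;>
        rcases extB hbB with ⟨f2, adj2⟩ | ⟨f2, adj2⟩
      · exact conclude w C F s(a,c) s(b,d) f1 f2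
          (by clear * - hnab hnbc hncd hnda hac hbd; rw [ne_eq, Sym2.eq_iff]; tauto) (wAC adj1) (wBD adj2)
          (memS _ _ mA mC) (memS _ _ mB mD)
      · exact conclude w C F s(a,c) s(b,c) f1 f2
          (by clear * - hnab hnbc hncd hnda hac hbd; rw [ne_eq, Sym2.eq_iff]; tauto) (wAC adj1) wbc
          (memS _ _ mA mC) (memS _ _ mB mC)
      · exact conclude w C F s(a,d) s(b,d) f1 f2
          (by clear * - hnab hnbc hncd hnda hac hbd; rw [ne_eq, Sym2.eq_iff]; tauto) wad (wBD adj2)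
          (memS _ _ mA mD) (memS _ _ mB mD)
      · exact conclude w C F s(a,d) s(b,c) f1 f2
          (by clear * - hnab hnbc hncd hnda hac hbd; rw [ne_eq, Sym2.eq_iff]; tauto) wad wbc
          (memS _ _ mA mD) (memS _ _ mB mC)
  · rcases badCB with hbC | hbB
    · -- Bad d, Bad c
      rcases extD hbD with ⟨f1, adj1⟩ | ⟨f1, adj1⟩ <;>
        rcases extC hbC with ⟨f2, adj2⟩ | ⟨f2, adj2⟩
      · exact conclude w C F s(d,b) s(c,a) f1 f2
          (by clear * - hnab hnbc hncd hnda hac hbd; rw [ne_eq, Sym2.eq_iff]; tauto) (wdb adj1) (wca adj2)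
          (memS _ _ mD mB) (memS _ _ mC mA)
      · exact conclude w C F s(d,b) s(c,b) f1 f2
          (by clear * - hnab hnbc hncd hnda hac hbd; rw [ne_eq, Sym2.eq_iff]; tauto) (wdb adj1) wcb
          (memS _ _ mD mB) (memS _ _ mC mB)
      · exact conclude w C F s(d,a) s(c,a) f1 f2
          (by clear * - hnab hnbc hncd hnda hac hbd; rw [ne_eq, Sym2.eq_iff]; tauto) wda (wca adj2)
          (memS _ _ mD mA) (memS _ _ mC mA)
      · exact conclude w C F s(d,a) s(c,b) f1 f2
          (by clear * - hnab hnbc hncd hnda hac hbd; rw [ne_eq, Sym2.eq_iff]; tauto) wda wcb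
          (memS _ _ mD mA) (memS _ _ mC mB)
    · -- Bad d, Bad b
      rcases extD hbD with ⟨f1, adj1⟩ | ⟨f1, adj1⟩
      · rcases extB hbB with ⟨f2, adj2⟩ | ⟨f2, adj2⟩
        · -- s(d,b) and s(b,d): same edge; use pathAC
          have badAC2 : (∀ x, G.Adj a x → x ∈ C) ∨ (∀ x, G.Adj c x → x ∈ C) := by
            by_contra h
            push_neg at h
            obtain ⟨⟨x, hx1, hx2⟩, ⟨y, hy1, hy2⟩⟩ := h
            exact pathAC adj2 ⟨x, hx2, hx1⟩ ⟨y, hy2, hy1⟩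
          rcases badAC2 with hbA | hbC
          · rcases extA hbA with ⟨f3, adj3⟩ | ⟨f3, adj3⟩
            · exact conclude w C F s(d,b) s(a,c) f1 f3
                (by clear * - hnab hnbc hncd hnda hac hbd; rw [ne_eq, Sym2.eq_iff]; tauto) (wdb adj1) (wAC adj3)
                (memS _ _ mD mB) (memS _ _ mA mC)
            · exact conclude w C F s(d,b) s(a,d) f1 f3
                (by clear * - hnab hnbc hncd hnda hac hbd; rw [ne_eq, Sym2.eq_iff]; tauto) (wdb adj1) wad
                (memS _ _ mD mB) (memS _ _ mA mD)
          · rcases extC hbC with ⟨f3, adj3⟩ | ⟨f3, adj3⟩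
            · exact conclude w C F s(d,b) s(c,a) f1 f3
                (by clear * - hnab hnbc hncd hnda hac hbd; rw [ne_eq, Sym2.eq_iff]; tauto) (wdb adj1) (wca adj3)
                (memS _ _ mD mB) (memS _ _ mC mA)
            · exact conclude w C F s(d,b) s(c,b) f1 f3
                (by clear * - hnab hnbc hncd hnda hac hbd; rw [ne_eq, Sym2.eq_iff]; tauto) (wdb adj1) wcb
                (memS _ _ mD mB) (memS _ _ mC mB)
        · exact conclude w C F s(d,b) s(b,c) f1 f2
            (by clear * - hnab hnbc hncd hnda hac hbd; rw [ne_eq, Sym2.eq_iff]; tauto) (wdb adj1) wbc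
            (memS _ _ mD mB) (memS _ _ mB mC)
      · rcases extB hbB with ⟨f2, adj2⟩ | ⟨f2, adj2⟩
        · exact conclude w C F s(d,a) s(b,d) f1 f2
            (by clear * - hnab hnbc hncd hnda hac hbd; rw [ne_eq, Sym2.eq_iff]; tauto) wda (wBD adj2)
            (memS _ _ mD mA) (memS _ _ mB mD)
        · exact conclude w C F s(d,a) s(b,c) f1 f2
            (by clear * - hnab hnbc hncd hnda hac hbd; rw [ne_eq, Sym2.eq_iff]; tauto) wda wbc
            (memS _ _ mD mA) (memS _ _ mB mC)

set_option maxHeartbeats 2000000 in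
theorem stmt2 {V : Type*} [Fintype V] [DecidableEq V]
    (G : SimpleGraph V) (w : Sym2 V → ℕ)
    (hw : ∀ e ∈ G.edgeSet, w e ≤ 1) (hmatch : ZeroEdgesMatching G w)
    (hG : TwoEdgeConnected G)
    (C : Finset V) (hC : C.card = 3 ∨ C.card = 4)
    -- `G[C]` contains a Hamiltonian cycle having exactly 2 unit-edges:
    -- a cycle in `G` whose vertex set is exactly `C` with exactly 2 unit-edges.
    (hcyc : ∃ (v : V) (c : G.Walk v v), c.IsCycle ∧ (∀ u : V, u ∈ c.support ↔ u ∈ C) ∧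
      (c.edges.filter (fun e => w e = 1)).length = 2)
    -- there is no Hamiltonian path of `G[C]` with exactly one unit-edge whose
    -- two endpoints both have a neighbor outside `C`.
    (hpath : ¬ ∃ (a b : V) (p : G.Walk a b), p.IsPath ∧ (∀ u : V, u ∈ p.support ↔ u ∈ C) ∧
      (p.edges.filter (fun e => w e = 1)).length = 1 ∧
      (∃ x, x ∉ C ∧ G.Adj a x) ∧ (∃ y, y ∉ C ∧ G.Adj b y)) :
    ∀ F : Finset (Sym2 V), IsTwoECSS G F →
      2 ≤ (F.filter (fun e => w e = 1 ∧ ∀ x ∈ e, x ∈ C)).card := by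
  intro F hF
  have hm : ∀ e ∈ G.edgeSet, ∀ f ∈ G.edgeSet, w e = 0 → w f = 0 → e ≠ f →
      ∀ x : V, ¬(x ∈ e ∧ x ∈ f) := hmatch
  obtain ⟨v, cyc, hcyc1, hsupp, hfilt⟩ := hcyc
  cases cyc with
  | nil => exact absurd rfl hcyc1.ne_nil
  | cons h1 p =>
  rename_i b
  have htn : p.support.Nodup := by
    have := hcyc1.2
    simpa using this
  have hCp : ∀ x, x ∈ p.support ↔ x ∈ C := by
    intro x
    constructor
    · intro hx; exact (hsupp x).mp (by simp [hx])
    · intro hx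
      have hs := (hsupp x).mpr hx
      rw [Walk.support_cons, List.mem_cons] at hs
      rcases hs with rfl | h
      exacts [p.end_mem_support, h]
  have hlen : p.length + 1 = C.card := by
    rw [← Walk.length_support, ← List.toFinset_card_of_nodup htn]
    congr 1
    ext x
    rw [List.mem_toFinset]
    exact hCp x
  clear hsupp hcyc1
  rcases hC with hc | hc
  · -- triangle case
    rw [hc] at hlen
    cases p with
    | nil => simp at hlen
    | cons h2 q =>
    rename_i c
    cases q with
    | nil => simp at hlen
    | cons h3' r =>
    cases r with
    | cons h4 s => simp [Walk.length_cons] at hlen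
    | nil =>
    -- h1 : Adj v b, h2 : Adj b c, h3' : Adj c v
    simp [List.nodup_cons] at htn
    obtain ⟨⟨nbc, nbv⟩, ncv⟩ := htn
    have hCset1 : ∀ u, u ∈ C ↔ u = v ∨ u = b ∨ u = c := by
      intro u
      rw [← hCp u]
      simp [Walk.support_cons]
      clear * -
      tauto
    simp only [Walk.edges_cons, Walk.edges_nil] at hfilt
    have W1 : w s(v,b) = 0 ∨ w s(v,b) = 1 := by
      have := hw s(v,b) (G.mem_edgeSet.mpr h1); omega
    have W2 : w s(b,c) = 0 ∨ w s(b,c) = 1 := by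
      have := hw s(b,c) (G.mem_edgeSet.mpr h2); omega
    have W3 : w s(c,v) = 0 ∨ w s(c,v) = 1 := by
      have := hw s(c,v) (G.mem_edgeSet.mpr h3'); omega
    rcases W1 with E1 | E1 <;> rcases W2 with E2 | E2 <;> rcases W3 with E3 | E3
    · simp [List.filter_cons, E1, E2, E3] at hfilt
    · simp [List.filter_cons, E1, E2, E3] at hfilt
    · simp [List.filter_cons, E1, E2, E3] at hfilt
    · exact tri_case G w C hpath v b c h1 h2 h3' E1 E2 E3 hCset1 F hF
    · simp [List.filter_cons, E1, E2, E3] at hfilt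
    · exact tri_case G w C hpath b c v h2 h3' h1 E2 E3 E1
        (fun u => by clear * - hCset1; rw [hCset1 u]; tauto) F hF
    · exact tri_case G w C hpath c v b h3' h1 h2 E3 E1 E2
        (fun u => by clear * - hCset1; rw [hCset1 u]; tauto) F hF
    · simp [List.filter_cons, E1, E2, E3] at hfilt
  · -- square case
    rw [hc] at hlen
    cases p with
    | nil => simp at hlen
    | cons h2 q =>
    rename_i c
    cases q with
    | nil => simp at hlen
    | cons h3' r =>
    rename_i d
    cases r with
    | nil => simp at hlen
    | cons h4 s =>
    cases s with
    | cons h5 t => simp [Walk.length_cons] at hlen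
    | nil =>
    -- h1 : Adj v b, h2 : Adj b c, h3' : Adj c d, h4 : Adj d v
    simp [List.nodup_cons] at htn
    obtain ⟨⟨nbc, nbd, nbv⟩, ⟨ncd, ncv⟩, ndv⟩ := htn
    have hCset1 : ∀ u, u ∈ C ↔ u = v ∨ u = b ∨ u = c ∨ u = d := by
      intro u
      rw [← hCp u]
      simp [Walk.support_cons]
      clear * -
      tauto
    simp only [Walk.edges_cons, Walk.edges_nil] at hfilt
    have W1 : w s(v,b) = 0 ∨ w s(v,b) = 1 := by
      have := hw s(v,b) (G.mem_edgeSet.mpr h1); omega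
    have W2 : w s(b,c) = 0 ∨ w s(b,c) = 1 := by
      have := hw s(b,c) (G.mem_edgeSet.mpr h2); omega
    have W3 : w s(c,d) = 0 ∨ w s(c,d) = 1 := by
      have := hw s(c,d) (G.mem_edgeSet.mpr h3'); omega
    have W4 : w s(d,v) = 0 ∨ w s(d,v) = 1 := by
      have := hw s(d,v) (G.mem_edgeSet.mpr h4); omega
    rcases W1 with E1 | E1 <;> rcases W2 with E2 | E2 <;>
      rcases W3 with E3 | E3 <;> rcases W4 with E4 | E4
    · simp [List.filter_cons, E1, E2, E3, E4] at hfilt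
    · simp [List.filter_cons, E1, E2, E3, E4] at hfilt
    · simp [List.filter_cons, E1, E2, E3, E4] at hfilt
    · -- 0 0 1 1 : zero edges s(v,b), s(b,c) share b
      exact absurd ⟨Sym2.mem_mk_right .., Sym2.mem_mk_left ..⟩
        (hm s(v,b) (G.mem_edgeSet.mpr h1) s(b,c) (G.mem_edgeSet.mpr h2) E1 E2
          (by clear * - nbc nbd nbv ncd ncv ndv; rw [ne_eq, Sym2.eq_iff]; tauto) b)
    · simp [List.filter_cons, E1, E2, E3, E4] at hfilt
    · exact quad_case G w C hw hm hpath v b c d h1 h2 h3' h4 (Ne.symm ncv) nbd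
        E1 E2 E3 E4 hCset1 F hF
    · -- 0 1 1 0 : zero edges s(v,b), s(d,v) share v
      exact absurd ⟨Sym2.mem_mk_left .., Sym2.mem_mk_right ..⟩
        (hm s(v,b) (G.mem_edgeSet.mpr h1) s(d,v) (G.mem_edgeSet.mpr h4) E1 E4
          (by clear * - nbc nbd nbv ncd ncv ndv; rw [ne_eq, Sym2.eq_iff]; tauto) v)
    · simp [List.filter_cons, E1, E2, E3, E4] at hfilt
    · simp [List.filter_cons, E1, E2, E3, E4] at hfilt
    · -- 1 0 0 1 : zero edges s(b,c), s(c,d) share c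
      exact absurd ⟨Sym2.mem_mk_right .., Sym2.mem_mk_left ..⟩
        (hm s(b,c) (G.mem_edgeSet.mpr h2) s(c,d) (G.mem_edgeSet.mpr h3') E2 E3
          (by clear * - nbc nbd nbv ncd ncv ndv; rw [ne_eq, Sym2.eq_iff]; tauto) c)
    · exact quad_case G w C hw hm hpath b c d v h2 h3' h4 h1 nbd ncv
        E2 E3 E4 E1 (fun u => by clear * - hCset1; rw [hCset1 u]; tauto) F hF
    · simp [List.filter_cons, E1, E2, E3, E4] at hfilt
    · -- 1 1 0 0 : zero edges s(c,d), s(d,v) share d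
      exact absurd ⟨Sym2.mem_mk_right .., Sym2.mem_mk_left ..⟩
        (hm s(c,d) (G.mem_edgeSet.mpr h3') s(d,v) (G.mem_edgeSet.mpr h4) E3 E4
          (by clear * - nbc nbd nbv ncd ncv ndv; rw [ne_eq, Sym2.eq_iff]; tauto) d)
    · simp [List.filter_cons, E1, E2, E3, E4] at hfilt
    · simp [List.filter_cons, E1, E2, E3, E4] at hfilt
    · simp [List.filter_cons, E1, E2, E3, E4] at hfilt
end

section
/- Let G be a finite simple 2-edge-connected graph with 0/1 edge weights, let u be a vertex of G, and suppose V(G) \ {u} = V1 ∪ V2 where V1 and V2 are disjoint and nonempty and no edge of G joins a vertex of V1 to a vertex of V2 (so u is a cut vertex). Then opt(G) = opt(G[V1 ∪ {u}]) + opt(G[V2 ∪ {u}]), where both induced subgraphs G[V1 ∪ {u}] and G[V2 ∪ {u}] admit 2-edge-connected spanning subgraphs. -/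
open scoped Classical

/-- The minimum weight of a 2-edge-connected spanning subgraph of `G`. -/
noncomputable def opt {V : Type*} [Fintype V] (G : SimpleGraph V) (w : Sym2 V → ℕ) : ℕ :=
  sInf {n | ∃ F : Finset (Sym2 V), IsTwoECSS G F ∧ wt w F = n}


set_option linter.unusedSectionVars false

lemma isTwoECSS_irrel {α : Type*} {i1 i2 : Fintype α} {G : SimpleGraph α}
    {F : Finset (Sym2 α)} : @IsTwoECSS α i1 G F ↔ @IsTwoECSS α i2 G F := by
  cases Subsingleton.elim i1 i2
  rfl

section Aux

open SimpleGraph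

variable {V : Type*} [Fintype V]

/-- all endpoints of `e` lie in `A`. -/
def EIn (A : Set V) (e : Sym2 V) : Prop := ∀ x ∈ e, x ∈ A

lemma eIn_mk {A : Set V} {a b : V} : EIn A s(a, b) ↔ a ∈ A ∧ b ∈ A := by
  constructor
  · intro h; exact ⟨h a (by simp), h b (by simp)⟩
  · rintro ⟨ha, hb⟩ x hx
    rcases Sym2.mem_iff.mp hx with rfl | rfl <;> assumption

lemma fromEdgeSet_del (s : Set (Sym2 V)) (e : Sym2 V) :
    (SimpleGraph.fromEdgeSet s).deleteEdges {e} = SimpleGraph.fromEdgeSet (s \ {e}) := by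
  ext a b
  simp only [SimpleGraph.deleteEdges_adj, SimpleGraph.fromEdgeSet_adj, Set.mem_diff,
    Set.mem_singleton_iff]
  tauto

lemma reach_map {W : Type*} {H : SimpleGraph V} {K : SimpleGraph W} (f : V → W)
    (hadj : ∀ a b, H.Adj a b → f a = f b ∨ K.Adj (f a) (f b))
    {x y : V} (h : H.Reachable x y) : K.Reachable (f x) (f y) := by
  obtain ⟨p⟩ := h
  induction p with
  | nil => exact SimpleGraph.Reachable.refl _
  | cons h' p ih =>
      rcases hadj _ _ h' with he | ha
      · rw [he]; exact ih
      · exact ha.reachable.trans ih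

/-- pull back a finset of edges of `V` to edges on the subtype `↥A`. -/
noncomputable def pull (A : Set V) (F : Finset (Sym2 V)) : Finset (Sym2 ↥A) :=
  Finset.univ.filter (fun e => Sym2.map Subtype.val e ∈ F)

lemma mem_pull {A : Set V} {F : Finset (Sym2 V)} {e : Sym2 ↥A} :
    e ∈ pull A F ↔ Sym2.map Subtype.val e ∈ F := by simp [pull]

lemma coe_pull {A : Set V} {F : Finset (Sym2 V)} :
    (↑(pull A F) : Set (Sym2 ↥A)) = {e : Sym2 ↥A | Sym2.map Subtype.val e ∈ F} := by
  ext e; simp [pull]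

lemma image_pull_subset {A : Set V} {F : Finset (Sym2 V)} :
    (pull A F).image (Sym2.map Subtype.val) ⊆ F := by
  intro e he
  obtain ⟨a, ha, rfl⟩ := Finset.mem_image.mp he
  exact mem_pull.mp ha

lemma eIn_of_mem_image {A : Set V} {F' : Finset (Sym2 ↥A)} {e : Sym2 V}
    (h : e ∈ F'.image (Sym2.map Subtype.val)) : EIn A e := by
  obtain ⟨a, _, rfl⟩ := Finset.mem_image.mp h
  induction a using Sym2.ind with
  | _ x y =>
      rw [Sym2.map_pair_eq, eIn_mk]
      exact ⟨x.2, y.2⟩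

lemma mem_image_pull {A : Set V} {F : Finset (Sym2 V)} {e : Sym2 V} (he : e ∈ F)
    (hin : EIn A e) : e ∈ (pull A F).image (Sym2.map Subtype.val) := by
  induction e using Sym2.ind with
  | _ a b =>
      rw [eIn_mk] at hin
      refine Finset.mem_image.mpr ⟨s(⟨a, hin.1⟩, ⟨b, hin.2⟩), ?_, by rw [Sym2.map_pair_eq]⟩
      rw [mem_pull, Sym2.map_pair_eq]
      exact he

lemma eIn_isDiag {A B : Set V} {u : V} (hABu : ∀ x, x ∈ A → x ∈ B → x = u) {e : Sym2 V}
    (hA : EIn A e) (hB : EIn B e) : e.IsDiag := by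
  induction e using Sym2.ind with
  | _ a b =>
      rw [eIn_mk] at hA hB
      rw [Sym2.mk_isDiag_iff, hABu a hA.1 hB.1, hABu b hA.2 hB.2]

section Graph

variable {G : SimpleGraph V}

lemma map_induce_edge {A : Set V} {e : Sym2 ↥A} (he : e ∈ (G.induce A).edgeSet) :
    Sym2.map Subtype.val e ∈ G.edgeSet := by
  induction e using Sym2.ind with
  | _ a b =>
      rw [Sym2.map_pair_eq, SimpleGraph.mem_edgeSet] at *
      exact he

lemma images_disjoint {A B : Set V} {u : V} (hABu : ∀ x, x ∈ A → x ∈ B → x = u)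
    {F1 : Finset (Sym2 ↥A)} {F2 : Finset (Sym2 ↥B)}
    (h1 : (↑F1 : Set (Sym2 ↥A)) ⊆ (G.induce A).edgeSet) :
    Disjoint (F1.image (Sym2.map Subtype.val)) (F2.image (Sym2.map Subtype.val)) := by
  rw [Finset.disjoint_left]
  intro e he1 he2
  obtain ⟨a, ha, rfl⟩ := Finset.mem_image.mp he1
  exact G.not_isDiag_of_mem_edgeSet (map_induce_edge (h1 ha))
    (eIn_isDiag hABu (eIn_of_mem_image he1) (eIn_of_mem_image he2))

/-- projection connectivity: a connected subgraph on `V` projects to a connected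
subgraph on `↥A`. -/
lemma proj_connected {A B : Set V} {u : V} (huA : u ∈ A)
    (hABu : ∀ x, x ∈ A → x ∈ B → x = u)
    (s : Set (Sym2 V)) (hcls : ∀ e ∈ s, EIn A e ∨ EIn B e)
    (hconn : (SimpleGraph.fromEdgeSet s).Connected) :
    (SimpleGraph.fromEdgeSet {e : Sym2 ↥A | Sym2.map Subtype.val e ∈ s}).Connected := by
  classical
  set p : V → ↥A := fun v => if h : v ∈ A then ⟨v, h⟩ else ⟨u, huA⟩ with hp
  have hpA : ∀ (a : V) (ha : a ∈ A), p a = ⟨a, ha⟩ := by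
    intro a ha; simp [hp, ha]
  have key : ∀ x y : V, (SimpleGraph.fromEdgeSet s).Adj x y →
      p x = p y ∨
        (SimpleGraph.fromEdgeSet {e : Sym2 ↥A | Sym2.map Subtype.val e ∈ s}).Adj (p x) (p y) := by
    intro x y hxy
    rw [SimpleGraph.fromEdgeSet_adj] at hxy
    obtain ⟨hmem, hne⟩ := hxy
    rcases hcls _ hmem with hA | hB
    · rw [eIn_mk] at hA
      right
      rw [SimpleGraph.fromEdgeSet_adj]
      rw [hpA x hA.1, hpA y hA.2]
      refine ⟨?_, ?_⟩
      · rw [Set.mem_setOf_eq, Sym2.map_pair_eq]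
        exact hmem
      · intro h; exact hne (congrArg Subtype.val h)
    · left
      rw [eIn_mk] at hB
      have hx : p x = ⟨u, huA⟩ := by
        by_cases h : x ∈ A
        · rw [hpA x h]; exact Subtype.ext (hABu x h hB.1)
        · simp [hp, h]
      have hy : p y = ⟨u, huA⟩ := by
        by_cases h : y ∈ A
        · rw [hpA y h]; exact Subtype.ext (hABu y h hB.2)
        · simp [hp, h]
      rw [hx, hy]
  rw [SimpleGraph.connected_iff_exists_forall_reachable]
  refine ⟨⟨u, huA⟩, fun a => ?_⟩
  have h0 := hconn.preconnected u a.val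
  have h2 := reach_map p key h0
  rwa [hpA u huA, hpA a.val a.2, Subtype.coe_eta] at h2

/-- reaching `u` through a lifted connected edge set. -/
lemma reach_to_u {A : Set V} {u : V} (huA : u ∈ A) (SA : Set (Sym2 ↥A))
    (hconn : (SimpleGraph.fromEdgeSet SA).Connected)
    (S' : Set (Sym2 V)) (hsub : ∀ e ∈ SA, Sym2.map Subtype.val e ∈ S')
    {v : V} (hv : v ∈ A) :
    (SimpleGraph.fromEdgeSet S').Reachable v u := by
  have key : ∀ a b : ↥A, (SimpleGraph.fromEdgeSet SA).Adj a b →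
      (Subtype.val a = Subtype.val b ∨
        (SimpleGraph.fromEdgeSet S').Adj a.val b.val) := by
    intro a b hab
    rw [SimpleGraph.fromEdgeSet_adj] at hab
    right
    rw [SimpleGraph.fromEdgeSet_adj]
    refine ⟨?_, fun h => hab.2 (Subtype.ext h)⟩
    have := hsub _ hab.1
    rwa [Sym2.map_pair_eq] at this
  exact reach_map Subtype.val key (hconn.preconnected ⟨v, hv⟩ ⟨u, huA⟩)

lemma split_isTwoECSS {A B : Set V} {u : V} (huA : u ∈ A)
    (hABu : ∀ x, x ∈ A → x ∈ B → x = u)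
    (hcardA : 2 ≤ Fintype.card ↥A)
    {F : Finset (Sym2 V)} (hF : IsTwoECSS G F)
    (hcls : ∀ e ∈ F, EIn A e ∨ EIn B e) :
    IsTwoECSS (G.induce A) (pull A F) := by
  obtain ⟨hsub, hconn, hcard, hbr⟩ := hF
  have hconnA : (SimpleGraph.fromEdgeSet (↑(pull A F) : Set (Sym2 ↥A))).Connected := by
    rw [coe_pull]
    exact proj_connected huA hABu (↑F) (fun e he => hcls e (Finset.mem_coe.mp he))
      hconn
  refine ⟨?_, hconnA, hcardA, ?_⟩
  · intro e he
    rw [Finset.mem_coe, mem_pull] at he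
    have hmem : Sym2.map Subtype.val e ∈ G.edgeSet := hsub (Finset.mem_coe.mpr he)
    induction e using Sym2.ind with
    | _ x y =>
        rw [Sym2.map_pair_eq, SimpleGraph.mem_edgeSet] at hmem
        rw [SimpleGraph.mem_edgeSet]
        exact hmem
  · intro e he
    rw [mem_pull] at he
    have h := hbr _ he
    rw [fromEdgeSet_del] at h
    have h2 := proj_connected huA hABu ((↑F : Set (Sym2 V)) \ {Sym2.map Subtype.val e})
      (fun e' he' => hcls e' (Finset.mem_coe.mp he'.1)) h
    have hset : {e' : Sym2 ↥A |
        Sym2.map Subtype.val e' ∈ ((↑F : Set (Sym2 V)) \ {Sym2.map Subtype.val e})}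
        = (↑(pull A F) : Set (Sym2 ↥A)) \ {e} := by
      ext a
      simp only [Set.mem_setOf_eq, Set.mem_diff, Set.mem_singleton_iff, Finset.mem_coe,
        mem_pull, coe_pull, Set.mem_setOf_eq,
        (Sym2.map.injective Subtype.val_injective).eq_iff]
    rw [hset] at h2
    rw [fromEdgeSet_del]
    exact h2

lemma glue_isTwoECSS {A B : Set V} {u : V} (huA : u ∈ A) (huB : u ∈ B)
    (hcv : ∀ v : V, v ∈ A ∨ v ∈ B)
    (hABu : ∀ x, x ∈ A → x ∈ B → x = u)
    (hcard : 2 ≤ Fintype.card V)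
    {F1 : Finset (Sym2 ↥A)} {F2 : Finset (Sym2 ↥B)}
    (h1 : IsTwoECSS (G.induce A) F1) (h2 : IsTwoECSS (G.induce B) F2) :
    IsTwoECSS G (F1.image (Sym2.map Subtype.val) ∪ F2.image (Sym2.map Subtype.val)) := by
  obtain ⟨hsub1, hconn1, -, hbr1⟩ := h1
  obtain ⟨hsub2, hconn2, -, hbr2⟩ := h2
  set Fg := F1.image (Sym2.map Subtype.val) ∪ F2.image (Sym2.map Subtype.val) with hFg
  have hdisjim := images_disjoint (G := G) hABu (F2 := F2) hsub1
  have hsubG : (↑Fg : Set (Sym2 V)) ⊆ G.edgeSet := by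
    intro e he
    rw [Finset.mem_coe, hFg, Finset.mem_union] at he
    rcases he with he | he
    · obtain ⟨a, ha, rfl⟩ := Finset.mem_image.mp he
      exact map_induce_edge (hsub1 (Finset.mem_coe.mpr ha))
    · obtain ⟨a, ha, rfl⟩ := Finset.mem_image.mp he
      exact map_induce_edge (hsub2 (Finset.mem_coe.mpr ha))
  have hin1 : ∀ e ∈ (↑F1 : Set (Sym2 ↥A)), Sym2.map Subtype.val e ∈ (↑Fg : Set (Sym2 V)) := by
    intro e he
    exact Finset.mem_coe.mpr (Finset.mem_union_left _ (Finset.mem_image_of_mem _ he))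
  have hin2 : ∀ e ∈ (↑F2 : Set (Sym2 ↥B)), Sym2.map Subtype.val e ∈ (↑Fg : Set (Sym2 V)) := by
    intro e he
    exact Finset.mem_coe.mpr (Finset.mem_union_right _ (Finset.mem_image_of_mem _ he))
  refine ⟨hsubG, ?_, hcard, ?_⟩
  · rw [SimpleGraph.connected_iff_exists_forall_reachable]
    refine ⟨u, fun v => ?_⟩
    rcases hcv v with hv | hv
    · exact (reach_to_u huA _ hconn1 _ hin1 hv).symm
    · exact (reach_to_u huB _ hconn2 _ hin2 hv).symm
  · intro e he
    rw [fromEdgeSet_del]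
    rw [SimpleGraph.connected_iff_exists_forall_reachable]
    refine ⟨u, fun v => ?_⟩
    rw [hFg, Finset.mem_union] at he
    rcases he with he | he
    · obtain ⟨e1, he1, rfl⟩ := Finset.mem_image.mp he
      have sub2 : ∀ f ∈ (↑F2 : Set (Sym2 ↥B)),
          Sym2.map Subtype.val f ∈ (↑Fg : Set (Sym2 V)) \ {Sym2.map Subtype.val e1} := by
        intro f hf
        refine ⟨hin2 f hf, ?_⟩
        intro hfe
        exact Finset.disjoint_left.mp hdisjim he
          (hfe ▸ Finset.mem_image_of_mem _ (Finset.mem_coe.mp hf))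
      have sub1 : ∀ f ∈ (↑F1 : Set (Sym2 ↥A)) \ {e1},
          Sym2.map Subtype.val f ∈ (↑Fg : Set (Sym2 V)) \ {Sym2.map Subtype.val e1} := by
        intro f hf
        exact ⟨hin1 f hf.1, (Sym2.map.injective Subtype.val_injective).ne hf.2⟩
      have hconn1' :
          (SimpleGraph.fromEdgeSet ((↑F1 : Set (Sym2 ↥A)) \ {e1})).Connected := by
        have := hbr1 e1 he1
        rwa [fromEdgeSet_del] at this
      rcases hcv v with hv | hv
      · exact (reach_to_u huA _ hconn1' _ sub1 hv).symm
      · exact (reach_to_u huB _ hconn2 _ sub2 hv).symm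
    · obtain ⟨e2, he2, rfl⟩ := Finset.mem_image.mp he
      have sub1 : ∀ f ∈ (↑F1 : Set (Sym2 ↥A)),
          Sym2.map Subtype.val f ∈ (↑Fg : Set (Sym2 V)) \ {Sym2.map Subtype.val e2} := by
        intro f hf
        refine ⟨hin1 f hf, ?_⟩
        intro hfe
        exact Finset.disjoint_left.mp hdisjim
          (hfe ▸ Finset.mem_image_of_mem _ (Finset.mem_coe.mp hf)) he
      have sub2 : ∀ f ∈ (↑F2 : Set (Sym2 ↥B)) \ {e2},
          Sym2.map Subtype.val f ∈ (↑Fg : Set (Sym2 V)) \ {Sym2.map Subtype.val e2} := by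
        intro f hf
        exact ⟨hin2 f hf.1, (Sym2.map.injective Subtype.val_injective).ne hf.2⟩
      have hconn2' :
          (SimpleGraph.fromEdgeSet ((↑F2 : Set (Sym2 ↥B)) \ {e2})).Connected := by
        have := hbr2 e2 he2
        rwa [fromEdgeSet_del] at this
      rcases hcv v with hv | hv
      · exact (reach_to_u huA _ hconn1 _ sub1 hv).symm
      · exact (reach_to_u huB _ hconn2' _ sub2 hv).symm

lemma wt_glue {A B : Set V} {u : V} (hABu : ∀ x, x ∈ A → x ∈ B → x = u)
    {G : SimpleGraph V}
    (w : Sym2 V → ℕ) {F1 : Finset (Sym2 ↥A)} {F2 : Finset (Sym2 ↥B)}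
    (h1 : (↑F1 : Set (Sym2 ↥A)) ⊆ (G.induce A).edgeSet) :
    wt w (F1.image (Sym2.map Subtype.val) ∪ F2.image (Sym2.map Subtype.val)) =
      wt (fun e => w (Sym2.map Subtype.val e)) F1 +
      wt (fun e => w (Sym2.map Subtype.val e)) F2 := by
  unfold wt
  rw [Finset.sum_union (images_disjoint (G := G) hABu h1),
    Finset.sum_image (fun x _ y _ h => Sym2.map.injective Subtype.val_injective h),
    Finset.sum_image (fun x _ y _ h => Sym2.map.injective Subtype.val_injective h)]

lemma eq_union_pull {A B : Set V} (F : Finset (Sym2 V))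
    (hcls : ∀ e ∈ F, EIn A e ∨ EIn B e) :
    F = (pull A F).image (Sym2.map Subtype.val) ∪ (pull B F).image (Sym2.map Subtype.val) := by
  apply Finset.Subset.antisymm
  · intro e he
    rcases hcls e he with h | h
    · exact Finset.mem_union_left _ (mem_image_pull he h)
    · exact Finset.mem_union_right _ (mem_image_pull he h)
  · exact Finset.union_subset image_pull_subset image_pull_subset

end Graph

end Aux


set_option maxHeartbeats 2000000 in
theorem stmt5 {V : Type*} [Fintype V]
    (G : SimpleGraph V) (w : Sym2 V → ℕ) (hw : ∀ e ∈ G.edgeSet, w e ≤ 1)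
    (hG : TwoEdgeConnected G)
    (u : V) (V1 V2 : Set V)
    (hdisj : Disjoint V1 V2) (h1 : V1.Nonempty) (h2 : V2.Nonempty)
    (hcover : V1 ∪ V2 = {v : V | v ≠ u})
    (hnoedge : ∀ a ∈ V1, ∀ b ∈ V2, ¬ G.Adj a b) :
    (∃ F, IsTwoECSS (G.induce (V1 ∪ {u})) F) ∧
    (∃ F, IsTwoECSS (G.induce (V2 ∪ {u})) F) ∧
    opt G w =
      opt (G.induce (V1 ∪ {u})) (fun e => w (Sym2.map Subtype.val e)) +
      opt (G.induce (V2 ∪ {u})) (fun e => w (Sym2.map Subtype.val e)) := by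
  classical
  have huS1 : u ∈ V1 ∪ {u} := Or.inr rfl
  have huS2 : u ∈ V2 ∪ {u} := Or.inr rfl
  have hne1 : ∀ a ∈ V1, a ≠ u := by
    intro a ha
    have h : a ∈ V1 ∪ V2 := Or.inl ha
    rw [hcover] at h
    exact h
  have h12 : ∀ x, x ∈ V1 ∪ {u} → x ∈ V2 ∪ {u} → x = u := by
    rintro x (hx | hx) (hx' | hx')
    · exact absurd hx' (Set.disjoint_left.mp hdisj hx)
    · exact hx'
    · exact hx
    · exact hx
  have h21 : ∀ x, x ∈ V2 ∪ {u} → x ∈ V1 ∪ {u} → x = u := fun x h h' => h12 x h' h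
  have hcv : ∀ v : V, v ∈ V1 ∪ {u} ∨ v ∈ V2 ∪ {u} := by
    intro v
    by_cases hv : v = u
    · exact Or.inl (Or.inr hv)
    · have h : v ∈ V1 ∪ V2 := by rw [hcover]; exact hv
      rcases h with h | h
      · exact Or.inl (Or.inl h)
      · exact Or.inr (Or.inl h)
  have hcls : ∀ e ∈ G.edgeSet, EIn (V1 ∪ {u}) e ∨ EIn (V2 ∪ {u}) e := by
    intro e
    induction e using Sym2.ind with
    | _ a b =>
      intro he
      rw [SimpleGraph.mem_edgeSet] at he
      have tri : ∀ v : V, v ∈ V1 ∨ v ∈ V2 ∨ v = u := by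
        intro v
        by_cases hv : v = u
        · exact Or.inr (Or.inr hv)
        · have h : v ∈ V1 ∪ V2 := by rw [hcover]; exact hv
          rcases h with h | h
          · exact Or.inl h
          · exact Or.inr (Or.inl h)
      rcases tri a with ha | ha | ha <;> rcases tri b with hb | hb | hb
      · exact Or.inl (eIn_mk.mpr ⟨Or.inl ha, Or.inl hb⟩)
      · exact absurd he (hnoedge a ha b hb)
      · exact Or.inl (eIn_mk.mpr ⟨Or.inl ha, Or.inr hb⟩)
      · exact absurd he.symm (hnoedge b hb a ha)
      · exact Or.inr (eIn_mk.mpr ⟨Or.inl ha, Or.inl hb⟩)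
      · exact Or.inr (eIn_mk.mpr ⟨Or.inl ha, Or.inr hb⟩)
      · exact Or.inl (eIn_mk.mpr ⟨Or.inr ha, Or.inl hb⟩)
      · exact Or.inr (eIn_mk.mpr ⟨Or.inr ha, Or.inl hb⟩)
      · rw [ha, hb] at he
        exact absurd he (G.irrefl)
  obtain ⟨a1, ha1⟩ := h1
  obtain ⟨a2, ha2⟩ := h2
  have hc1 : ∀ i : Fintype ↥(V1 ∪ {u} : Set V), 2 ≤ @Fintype.card _ i := by
    intro i
    refine (@Fintype.one_lt_card_iff _ i).mpr ⟨⟨a1, Or.inl ha1⟩, ⟨u, huS1⟩, ?_⟩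
    intro h
    exact hne1 a1 ha1 (congrArg Subtype.val h)
  have hc2 : ∀ i : Fintype ↥(V2 ∪ {u} : Set V), 2 ≤ @Fintype.card _ i := by
    intro i
    refine (@Fintype.one_lt_card_iff _ i).mpr ⟨⟨a2, Or.inl ha2⟩, ⟨u, huS2⟩, ?_⟩
    intro h
    refine absurd (congrArg Subtype.val h) ?_
    have hx : a2 ∈ V1 ∪ V2 := Or.inr ha2
    rw [hcover] at hx
    exact hx
  have hSne : {n | ∃ F : Finset (Sym2 V), IsTwoECSS G F ∧ wt w F = n}.Nonempty := by
    refine ⟨wt w G.edgeFinset, G.edgeFinset, ⟨?_, ?_, hG.2.1, ?_⟩, rfl⟩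
    · rw [SimpleGraph.coe_edgeFinset]
    · rw [SimpleGraph.coe_edgeFinset, SimpleGraph.fromEdgeSet_edgeSet]
      exact hG.1
    · intro e he
      rw [SimpleGraph.coe_edgeFinset, SimpleGraph.fromEdgeSet_edgeSet]
      exact hG.2.2 e (SimpleGraph.mem_edgeFinset.mp he)
  obtain ⟨F, hF, hwF⟩ := Nat.sInf_mem hSne
  have hclsF : ∀ e ∈ F, EIn (V1 ∪ {u}) e ∨ EIn (V2 ∪ {u}) e :=
    fun e he => hcls e (hF.1 (Finset.mem_coe.mpr he))
  have hF1 : IsTwoECSS (G.induce (V1 ∪ {u})) (pull (V1 ∪ {u}) F) :=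
    isTwoECSS_irrel.mp (split_isTwoECSS huS1 h12 (hc1 _) hF hclsF)
  have hF2 : IsTwoECSS (G.induce (V2 ∪ {u})) (pull (V2 ∪ {u}) F) :=
    isTwoECSS_irrel.mp (split_isTwoECSS huS2 h21 (hc2 _) hF (fun e he => (hclsF e he).symm))
  refine ⟨⟨_, hF1⟩, ⟨_, hF2⟩, ?_⟩
  have hwsplit : wt w F =
      wt (fun e => w (Sym2.map Subtype.val e)) (pull (V1 ∪ {u}) F) +
      wt (fun e => w (Sym2.map Subtype.val e)) (pull (V2 ∪ {u}) F) := by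
    conv_lhs => rw [eq_union_pull F hclsF]
    exact wt_glue h12 (G := G) w hF1.1
  have hS1ne : {n | ∃ F' : Finset (Sym2 ↥(V1 ∪ {u} : Set V)),
      IsTwoECSS (G.induce (V1 ∪ {u})) F' ∧
      wt (fun e => w (Sym2.map Subtype.val e)) F' = n}.Nonempty := ⟨_, _, hF1, rfl⟩
  have hS2ne : {n | ∃ F' : Finset (Sym2 ↥(V2 ∪ {u} : Set V)),
      IsTwoECSS (G.induce (V2 ∪ {u})) F' ∧
      wt (fun e => w (Sym2.map Subtype.val e)) F' = n}.Nonempty := ⟨_, _, hF2, rfl⟩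
  obtain ⟨F1m, hF1m, hw1⟩ := Nat.sInf_mem hS1ne
  obtain ⟨F2m, hF2m, hw2⟩ := Nat.sInf_mem hS2ne
  apply le_antisymm
  · have hglue := glue_isTwoECSS huS1 huS2 hcv h12 hG.2.1 (isTwoECSS_irrel.mp hF1m) (isTwoECSS_irrel.mp hF2m)
    have hle : opt G w ≤
        wt w (F1m.image (Sym2.map Subtype.val) ∪ F2m.image (Sym2.map Subtype.val)) :=
      Nat.sInf_le ⟨_, hglue, rfl⟩
    rw [wt_glue h12 (G := G) w hF1m.1, hw1, hw2] at hle
    exact hle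
  · have le1 : opt (G.induce (V1 ∪ {u})) (fun e => w (Sym2.map Subtype.val e)) ≤
        wt (fun e => w (Sym2.map Subtype.val e)) (pull (V1 ∪ {u}) F) :=
      Nat.sInf_le ⟨_, hF1, rfl⟩
    have le2 : opt (G.induce (V2 ∪ {u})) (fun e => w (Sym2.map Subtype.val e)) ≤
        wt (fun e => w (Sym2.map Subtype.val e)) (pull (V2 ∪ {u}) F) :=
      Nat.sInf_le ⟨_, hF2, rfl⟩
    have hsum := add_le_add le1 le2
    rw [← hwsplit] at hsum
    calc opt (G.induce (V1 ∪ {u})) (fun e => w (Sym2.map Subtype.val e)) +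
          opt (G.induce (V2 ∪ {u})) (fun e => w (Sym2.map Subtype.val e)) ≤ wt w F := hsum
      _ = opt G w := hwF
end

section
/- Let G be a finite simple graph, let u be a vertex of G, and suppose V(G) \ {u} = V1 ∪ V2 where V1 and V2 are disjoint and nonempty and no edge of G joins a vertex of V1 to a vertex of V2. If F ⊆ E(G) is a 2-edge-connected spanning subgraph of G, then the set of edges of F with both endpoints in V1 ∪ {u} is a 2-edge-connected spanning subgraph of the induced subgraph G[V1 ∪ {u}]. -/
open scoped Classical

private lemma reach_map_s6 {V W : Type*} {A : SimpleGraph V} {B : SimpleGraph W} (f : V → W)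
    (h : ∀ v w, A.Adj v w → f v = f w ∨ B.Adj (f v) (f w)) {v w : V}
    (hr : A.Reachable v w) : B.Reachable (f v) (f w) := by
  obtain ⟨p⟩ := hr
  induction p with
  | nil => exact SimpleGraph.Reachable.refl _
  | cons hadj q ih =>
    rcases h _ _ hadj with he | hb
    · rw [he]; exact ih
    · exact hb.reachable.trans ih

theorem stmt6 {V : Type*} [Fintype V]
    (G : SimpleGraph V)
    (u : V) (V1 V2 : Set V)
    (hdisj : Disjoint V1 V2) (h1 : V1.Nonempty) (h2 : V2.Nonempty)
    (hcover : V1 ∪ V2 = {v : V | v ≠ u})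
    (hnoedge : ∀ a ∈ V1, ∀ b ∈ V2, ¬ G.Adj a b)
    (F : Finset (Sym2 V)) (hF : IsTwoECSS G F) :
    IsTwoECSS (G.induce (V1 ∪ {u}))
      (Finset.univ.filter
        (fun e : Sym2 ↥(V1 ∪ {u} : Set V) => Sym2.map Subtype.val e ∈ F)) := by
  set S : Set V := V1 ∪ {u} with hS
  have huS : u ∈ S := Or.inr rfl
  set F' : Finset (Sym2 ↥S) :=
    Finset.univ.filter (fun e : Sym2 ↥S => Sym2.map Subtype.val e ∈ F) with hF'
  -- membership in V2 implies not in S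
  have hV2neu : ∀ v ∈ V2, v ≠ u := by
    intro v hv
    have : v ∈ V1 ∪ V2 := Or.inr hv
    rw [hcover] at this
    exact this
  have hV1neu : ∀ v ∈ V1, v ≠ u := by
    intro v hv
    have : v ∈ V1 ∪ V2 := Or.inl hv
    rw [hcover] at this
    exact this
  have hV2S : ∀ v ∈ V2, v ∉ S := by
    intro v hv hvS
    rcases hvS with h | h
    · exact hdisj.le_bot ⟨h, hv⟩
    · exact hV2neu v hv h
  -- the retraction
  set f : V → ↥S := fun v => if h : v ∈ S then ⟨v, h⟩ else ⟨u, huS⟩ with hf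
  have hfS : ∀ (v : V) (h : v ∈ S), f v = ⟨v, h⟩ := by
    intro v h; simp [hf, h]
  -- edge classification
  have hedge : ∀ v w, s(v, w) ∈ F → v ≠ w → (v ∈ S ∧ w ∈ S) ∨ f v = f w := by
    intro v w hvw hne
    have hadj : G.Adj v w := by
      have := hF.1 hvw
      exact (SimpleGraph.mem_edgeSet G).mp this
    have tricho : ∀ x : V, x ∈ V1 ∨ x ∈ V2 ∨ x = u := by
      intro x
      by_cases hx : x = u
      · exact Or.inr (Or.inr hx)
      · have : x ∈ V1 ∪ V2 := by rw [hcover]; exact hx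
        rcases this with h | h
        · exact Or.inl h
        · exact Or.inr (Or.inl h)
    rcases tricho v with hv | hv | hv
    · rcases tricho w with hw | hw | hw
      · exact Or.inl ⟨Or.inl hv, Or.inl hw⟩
      · exact absurd hadj (hnoedge v hv w hw)
      · exact Or.inl ⟨Or.inl hv, hw ▸ huS⟩
    · rcases tricho w with hw | hw | hw
      · exact absurd hadj.symm (hnoedge w hw v hv)
      · -- both in V2
        right
        have h1' : v ∉ S := hV2S v hv
        have h2' : w ∉ S := hV2S w hw
        simp [hf, h1', h2']
      · -- v ∈ V2, w = u
        right
        have h1' : v ∉ S := hV2S v hv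
        subst hw
        simp [hf, h1', huS]
    · subst hv
      rcases tricho w with hw | hw | hw
      · exact Or.inl ⟨huS, Or.inl hw⟩
      · right
        have h2' : w ∉ S := hV2S w hw
        simp [hf, h2', huS]
      · exact absurd hw.symm hne
  -- basic adjacency for F'
  have hmemF' : ∀ (a b : ↥S), s(a, b) ∈ F' ↔ s(a.val, b.val) ∈ F := by
    intro a b
    simp [hF', Sym2.map_pair_eq]
  -- Part 1: F' ⊆ edge set of induced graph
  refine ⟨?_, ?_, ?_, ?_⟩
  · intro e he
    induction e using Sym2.ind with
    | _ a b =>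
      have hab : s(a.val, b.val) ∈ F := (hmemF' a b).mp he
      have hadj : G.Adj a.val b.val := (SimpleGraph.mem_edgeSet G).mp (hF.1 hab)
      have hne : a ≠ b := by
        intro h; subst h; exact hadj.ne rfl
      exact (SimpleGraph.mem_edgeSet _).mpr hadj
  · -- connectivity
    have hstep : ∀ v w, (SimpleGraph.fromEdgeSet (↑F : Set (Sym2 V))).Adj v w →
        f v = f w ∨ (SimpleGraph.fromEdgeSet (↑F' : Set (Sym2 ↥S))).Adj (f v) (f w) := by
      intro v w hvw
      rw [SimpleGraph.fromEdgeSet_adj] at hvw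
      obtain ⟨hmem, hne⟩ := hvw
      rcases hedge v w hmem hne with ⟨hvS, hwS⟩ | heq
      · right
        rw [hfS v hvS, hfS w hwS, SimpleGraph.fromEdgeSet_adj]
        refine ⟨(hmemF' _ _).mpr hmem, ?_⟩
        intro h
        exact hne (congrArg Subtype.val h)
      · exact Or.inl heq
    rw [SimpleGraph.connected_iff]
    refine ⟨?_, ⟨⟨u, huS⟩⟩⟩
    intro a b
    have hr := hF.2.1.preconnected a.val b.val
    have := reach_map_s6 f hstep hr
    rwa [hfS a.val a.2, hfS b.val b.2, Subtype.coe_eta, Subtype.coe_eta] at this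
  · -- cardinality
    obtain ⟨v₁, hv₁⟩ := h1
    refine Fintype.one_lt_card_iff.mpr ⟨⟨v₁, Or.inl hv₁⟩, ⟨u, huS⟩, ?_⟩
    intro h
    exact hV1neu v₁ hv₁ (congrArg Subtype.val h)
  · -- bridgelessness
    intro e he
    have heF : Sym2.map Subtype.val e ∈ F := (Finset.mem_filter.mp he).2
    set e₀ : Sym2 V := Sym2.map Subtype.val e with he₀
    have hstep : ∀ v w,
        ((SimpleGraph.fromEdgeSet (↑F : Set (Sym2 V))).deleteEdges {e₀}).Adj v w →
        f v = f w ∨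
          ((SimpleGraph.fromEdgeSet (↑F' : Set (Sym2 ↥S))).deleteEdges {e}).Adj (f v) (f w) := by
      intro v w hvw
      rw [SimpleGraph.deleteEdges_adj, SimpleGraph.fromEdgeSet_adj] at hvw
      obtain ⟨⟨hmem, hne⟩, hnotE⟩ := hvw
      rcases hedge v w hmem hne with ⟨hvS, hwS⟩ | heq
      · right
        rw [hfS v hvS, hfS w hwS, SimpleGraph.deleteEdges_adj, SimpleGraph.fromEdgeSet_adj]
        refine ⟨⟨(hmemF' _ _).mpr hmem, ?_⟩, ?_⟩
        · intro h; exact hne (congrArg Subtype.val h)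
        · intro h
          simp only [Set.mem_singleton_iff] at h
          apply hnotE
          simp only [Set.mem_singleton_iff]
          rw [he₀, ← h, Sym2.map_pair_eq]
      · exact Or.inl heq
    have hdel := hF.2.2.2 e₀ heF
    rw [SimpleGraph.connected_iff]
    refine ⟨?_, ⟨⟨u, huS⟩⟩⟩
    intro a b
    have hr := hdel.preconnected a.val b.val
    have := reach_map_s6 f hstep hr
    rwa [hfS a.val a.2, hfS b.val b.2, Subtype.coe_eta, Subtype.coe_eta] at this
end

section
/- Let G be a finite connected simple graph with no cut vertices, and let H be a connected spanning subgraph of G having exactly one bridge e = {u, v}, such that each of the two connected components of H − e contains at least 2 vertices. Then there exists an edge f ∈ E(G) \ E(H) such that the graph obtained from H by adding f is 2-edge-connected. -/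
open scoped Classical

/-- If the endpoints of a deleted edge remain reachable, then reachability in the
original graph transfers to the graph with the edge deleted. -/
lemma reach_del_of_reach {V : Type*} (K : SimpleGraph V) (p q : V)
    (hpq : (K.deleteEdges {s(p, q)}).Reachable p q) :
    ∀ {x y : V}, K.Reachable x y → (K.deleteEdges {s(p, q)}).Reachable x y := by
  intro x y h
  obtain ⟨w⟩ := h
  induction w with
  | nil => exact SimpleGraph.Reachable.refl _
  | @cons a c d hadj w' ih =>
    refine SimpleGraph.Reachable.trans ?_ ih
    by_cases he : s(a, c) = s(p, q)
    · rw [Sym2.eq_iff] at he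
      rcases he with ⟨rfl, rfl⟩ | ⟨rfl, rfl⟩
      · exact hpq
      · exact hpq.symm
    · exact SimpleGraph.Adj.reachable (by simp [SimpleGraph.deleteEdges_adj, hadj, he])

theorem stmt8 {V : Type*} [Fintype V]
    (G : SimpleGraph V) (hGconn : G.Connected)
    -- `G` has no cut vertices: deleting any vertex leaves a connected graph.
    (hnocut : ∀ v : V, (G.induce {x : V | x ≠ v}).Connected)
    -- `H` is a connected spanning subgraph of `G` with edge set `EH`.
    (EH : Set (Sym2 V)) (hEH : EH ⊆ G.edgeSet)
    (hHconn : (SimpleGraph.fromEdgeSet EH).Connected)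
    -- `s(u, v)` is the unique bridge of `H`.
    (u v : V)
    (hbridge : (SimpleGraph.fromEdgeSet EH).IsBridge s(u, v))
    (huniq : ∀ f : Sym2 V, (SimpleGraph.fromEdgeSet EH).IsBridge f → f = s(u, v))
    -- each of the two components of `H - e` has at least 2 vertices.
    (hcu : ∃ x, x ≠ u ∧ ((SimpleGraph.fromEdgeSet EH).deleteEdges {s(u, v)}).Reachable u x)
    (hcv : ∃ y, y ≠ v ∧ ((SimpleGraph.fromEdgeSet EH).deleteEdges {s(u, v)}).Reachable v y) :
    ∃ f ∈ G.edgeSet, f ∉ EH ∧ TwoEdgeConnected (SimpleGraph.fromEdgeSet (insert f EH)) := by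
  classical
  set H := SimpleGraph.fromEdgeSet EH with hH
  set H' := H.deleteEdges {s(u, v)} with hH'
  -- basic facts
  have hAdjuv : H.Adj u v := by
    by_contra hna
    have heq : H.deleteEdges {s(u, v)} = H := by
      ext x y
      simp only [SimpleGraph.deleteEdges_adj, Set.mem_singleton_iff]
      refine ⟨fun h => h.1, fun h => ⟨h, fun he => hna ?_⟩⟩
      rw [← SimpleGraph.mem_edgeSet, ← he]
      exact h
    have hb := SimpleGraph.isBridge_iff.mp hbridge
    rw [heq] at hb
    exact hb (hHconn.preconnected u v)
  have huv : u ≠ v := hAdjuv.ne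
  have hnr : ¬ H'.Reachable u v := SimpleGraph.isBridge_iff.mp hbridge
  -- every vertex is reachable from u or from v in H'
  have hcover : ∀ z : V, H'.Reachable u z ∨ H'.Reachable v z := by
    have key : ∀ {x z : V}, H.Walk x z →
        (H'.Reachable u x ∨ H'.Reachable v x) →
        (H'.Reachable u z ∨ H'.Reachable v z) := by
      intro x z w
      induction w with
      | nil => exact id
      | @cons a c d hadj w' ih =>
        intro hx
        apply ih
        by_cases he : s(a, c) = s(u, v)
        · rw [Sym2.eq_iff] at he
          rcases he with ⟨rfl, rfl⟩ | ⟨rfl, rfl⟩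
          · exact Or.inr (SimpleGraph.Reachable.refl _)
          · exact Or.inl (SimpleGraph.Reachable.refl _)
        · have hadj' : H'.Adj a c := by
            simp [hH', SimpleGraph.deleteEdges_adj, hadj, he]
          rcases hx with h | h
          · exact Or.inl (h.trans hadj'.reachable)
          · exact Or.inr (h.trans hadj'.reachable)
    intro z
    obtain ⟨w⟩ := hHconn.preconnected u z
    exact key w (Or.inl (SimpleGraph.Reachable.refl _))
  -- find a crossing edge of G different from s(u,v)
  have hcross : ∃ a b : V, G.Adj a b ∧ H'.Reachable u a ∧ H'.Reachable v b ∧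
      s(a, b) ≠ s(u, v) := by
    by_contra hcon
    push_neg at hcon
    obtain ⟨x, hxu, hux⟩ := hcu
    have hvne : v ≠ u := huv.symm
    -- in G minus u, x cannot reach v
    have key : ∀ (a c : {w : V // w ≠ u}) (p : (G.induce {w : V | w ≠ u}).Walk a c),
        H'.Reachable u a.1 → H'.Reachable v c.1 → False := by
      intro a c p
      induction p with
      | nil => exact fun h h' => hnr (h.trans h'.symm)
      | @cons a e d hadj p' ih =>
        intro ha hd
        have hGadj : G.Adj a.1 e.1 := hadj
        by_cases hc : H'.Reachable v e.1
        · have := hcon a.1 e.1 hGadj ha hc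
          rw [Sym2.eq_iff] at this
          rcases this with ⟨h1, h2⟩ | ⟨h1, h2⟩
          · exact a.2 h1
          · rw [h2] at hc
            exact hnr hc.symm
        · rcases hcover e.1 with h | h
          · exact ih h hd
          · exact hc h
    have hxne : (x : V) ≠ u := hxu
    obtain ⟨p⟩ := (hnocut u).preconnected ⟨x, hxne⟩ ⟨v, hvne⟩
    exact key ⟨x, hxne⟩ ⟨v, hvne⟩ p hux (SimpleGraph.Reachable.refl _)
  obtain ⟨a, b, hab, hua, hvb, hfne⟩ := hcross
  refine ⟨s(a, b), hab, ?_, ?_, ?_, ?_⟩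
  · -- s(a,b) ∉ EH
    intro hmem
    have hadjH : H.Adj a b := by
      rw [hH, SimpleGraph.fromEdgeSet_adj]
      exact ⟨hmem, hab.ne⟩
    have hadjH' : H'.Adj a b := by
      simp [hH', SimpleGraph.deleteEdges_adj, hadjH, hfne]
    exact hnr (hua.trans (hadjH'.reachable.trans hvb.symm))
  · -- connected
    have hle : H ≤ SimpleGraph.fromEdgeSet (insert s(a, b) EH) :=
      SimpleGraph.fromEdgeSet_mono (Set.subset_insert _ _)
    exact hHconn.mono hle
  · -- card ≥ 2
    exact Fintype.one_lt_card_iff_nontrivial.mpr ⟨u, v, huv⟩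
  · -- no bridges
    intro g hg
    set K := SimpleGraph.fromEdgeSet (insert s(a, b) EH) with hK
    rw [SimpleGraph.edgeSet_fromEdgeSet] at hg
    obtain ⟨hgmem, hgdiag⟩ := hg
    by_cases hgf : g = s(a, b)
    · -- deleting f : the graph still contains H
      subst hgf
      have hfEH : s(a, b) ∉ EH := by
        intro hmem
        have hadjH : H.Adj a b := by
          rw [hH, SimpleGraph.fromEdgeSet_adj]
          exact ⟨hmem, hab.ne⟩
        have hadjH' : H'.Adj a b := by
          simp [hH', SimpleGraph.deleteEdges_adj, hadjH, hfne]
        exact hnr (hua.trans (hadjH'.reachable.trans hvb.symm))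
      have hle : H ≤ K.deleteEdges {s(a, b)} := by
        intro x y hxy
        rw [hH, SimpleGraph.fromEdgeSet_adj] at hxy
        rw [SimpleGraph.deleteEdges_adj]
        refine ⟨?_, ?_⟩
        · rw [hK, SimpleGraph.fromEdgeSet_adj]
          exact ⟨Set.mem_insert_of_mem _ hxy.1, hxy.2⟩
        · simp only [Set.mem_singleton_iff]
          intro heq
          exact hfEH (heq ▸ hxy.1)
      exact hHconn.mono hle
    · rcases Set.mem_insert_iff.mp hgmem with h | hgEH
      · exact absurd h hgf
      by_cases hge : g = s(u, v)
      · -- deleting the old bridge: use the new edge f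
        subst hge
        have hle : H' ≤ K.deleteEdges {s(u, v)} := by
          intro x y hxy
          rw [hH', SimpleGraph.deleteEdges_adj, hH, SimpleGraph.fromEdgeSet_adj] at hxy
          rw [SimpleGraph.deleteEdges_adj]
          refine ⟨?_, hxy.2⟩
          rw [hK, SimpleGraph.fromEdgeSet_adj]
          exact ⟨Set.mem_insert_of_mem _ hxy.1.1, hxy.1.2⟩
        have habK : (K.deleteEdges {s(u, v)}).Adj a b := by
          rw [SimpleGraph.deleteEdges_adj]
          refine ⟨?_, by simpa using hfne⟩
          rw [hK, SimpleGraph.fromEdgeSet_adj]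
          exact ⟨Set.mem_insert _ _, hab.ne⟩
        have hreach : ∀ z : V, (K.deleteEdges {s(u, v)}).Reachable a z := by
          intro z
          rcases hcover z with h | h
          · exact SimpleGraph.Reachable.mono hle (hua.symm.trans h)
          · exact (habK.reachable).trans (SimpleGraph.Reachable.mono hle (hvb.symm.trans h))
        haveI : Nonempty V := ⟨u⟩
        exact SimpleGraph.Connected.mk fun x y => ((hreach x).symm.trans (hreach y))
      · -- deleting any other edge of H : it's not a bridge of H
        have hgH : g ∈ H.edgeSet := by
          rw [hH, SimpleGraph.edgeSet_fromEdgeSet]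
          exact ⟨hgEH, hgdiag⟩
        have hnb : ¬ H.IsBridge g := fun hb => hge (huniq g hb)
        obtain ⟨p, q⟩ := g
        have hadjpq : H.Adj p q := hgH
        have hreachpq : (H.deleteEdges {s(p, q)}).Reachable p q := by
          by_contra hr
          exact hnb (SimpleGraph.isBridge_iff.mpr hr)
        have hle : H.deleteEdges {s(p, q)} ≤ K.deleteEdges {s(p, q)} := by
          intro x y hxy
          rw [SimpleGraph.deleteEdges_adj] at hxy ⊢
          refine ⟨?_, hxy.2⟩
          rw [hH, SimpleGraph.fromEdgeSet_adj] at hxy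
          rw [hK, SimpleGraph.fromEdgeSet_adj]
          exact ⟨Set.mem_insert_of_mem _ hxy.1.1, hxy.1.2⟩
        haveI : Nonempty V := ⟨u⟩
        exact SimpleGraph.Connected.mk fun x y => SimpleGraph.Reachable.mono hle
          (reach_del_of_reach H p q hreachpq (hHconn.preconnected x y))
end

section
/- Let G be a finite simple graph on n ≥ 3 vertices with 0/1 edge weights whose zero-edges form a matching. Then every 2-edge-connected spanning subgraph of G contains at least ⌈n/2⌉ unit-edges; in particular, opt(G) ≥ 2 whenever G admits a 2-edge-connected spanning subgraph. -/
open scoped Classical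

theorem stmt11 {V : Type*} [Fintype V]
    (G : SimpleGraph V) (hV : 3 ≤ Fintype.card V)
    (w : Sym2 V → ℕ) (hw : ∀ e ∈ G.edgeSet, w e ≤ 1)
    (hmatch : ZeroEdgesMatching G w) :
    (∀ F : Finset (Sym2 V), IsTwoECSS G F →
      (Fintype.card V + 1) / 2 ≤ (F.filter (fun e => w e = 1)).card) ∧
    ((∃ F : Finset (Sym2 V), IsTwoECSS G F) → 2 ≤ opt G w) := by
  have key : ∀ F : Finset (Sym2 V), IsTwoECSS G F →
      (Fintype.card V + 1) / 2 ≤ (F.filter (fun e => w e = 1)).card := by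
    intro F hF
    obtain ⟨hsub, hconn, hcard2, hbridge⟩ := hF
    have hnbr : ∀ (K : SimpleGraph V), K.Connected → ∀ v : V, ∃ u, K.Adj v u := by
      intro K hK v
      obtain ⟨u, hu⟩ := Fintype.exists_ne_of_one_lt_card (by omega) v
      obtain ⟨p⟩ := hK.preconnected v u
      cases p with
      | nil => exact absurd rfl hu
      | cons h _ => exact ⟨_, h⟩
    have two_edges : ∀ v : V, ∃ e₁ ∈ F, ∃ e₂ ∈ F, e₁ ≠ e₂ ∧ v ∈ e₁ ∧ v ∈ e₂ := by
      intro v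
      obtain ⟨u, hu⟩ := hnbr _ hconn v
      rw [SimpleGraph.fromEdgeSet_adj] at hu
      have he₁F : s(v, u) ∈ F := hu.1
      obtain ⟨u', hu'⟩ := hnbr _ (hbridge _ he₁F) v
      rw [SimpleGraph.deleteEdges_adj, SimpleGraph.fromEdgeSet_adj] at hu'
      have he₂F : s(v, u') ∈ F := hu'.1.1
      have hne : s(v, u) ≠ s(v, u') := by
        intro h
        exact hu'.2 (by simp [h])
      exact ⟨s(v, u), he₁F, s(v, u'), he₂F, hne, by simp, by simp⟩
    have unit : ∀ v : V, ∃ e ∈ F.filter (fun e => w e = 1), v ∈ e := by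
      intro v
      obtain ⟨e₁, h1, e₂, h2, hne, hv1, hv2⟩ := two_edges v
      have ge1 : e₁ ∈ G.edgeSet := hsub h1
      have ge2 : e₂ ∈ G.edgeSet := hsub h2
      by_cases h0 : w e₁ = 0
      · have hne2 : w e₂ ≠ 0 := fun h0' =>
          hmatch e₁ ge1 e₂ ge2 h0 h0' hne v ⟨hv1, hv2⟩
        have := hw e₂ ge2
        exact ⟨e₂, Finset.mem_filter.mpr ⟨h2, by omega⟩, hv2⟩
      · have := hw e₁ ge1
        exact ⟨e₁, Finset.mem_filter.mpr ⟨h1, by omega⟩, hv1⟩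
    choose f hf hvf using unit
    have hcount : Fintype.card V ≤ 2 * (F.filter (fun e => w e = 1)).card := by
      rw [← Finset.card_univ]
      apply Finset.card_le_mul_card_image_of_maps_to (fun v _ => hf v)
      intro e _
      induction e using Sym2.ind with
      | _ a b =>
        have hsub' : Finset.univ.filter (fun v => f v = s(a, b)) ⊆ {a, b} := by
          intro v hv
          simp only [Finset.mem_filter] at hv
          have hm := hvf v
          rw [hv.2] at hm
          simpa [Finset.mem_insert, Finset.mem_singleton] using hm
        calc (Finset.univ.filter (fun v => f v = s(a, b))).card
            ≤ ({a, b} : Finset V).card := Finset.card_le_card hsub'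
          _ ≤ 2 := le_trans (Finset.card_insert_le _ _) (by simp)
    omega
  refine ⟨key, ?_⟩
  rintro ⟨F, hF⟩
  refine le_csInf ⟨wt w F, F, hF, rfl⟩ ?_
  rintro n ⟨F', hF', rfl⟩
  have h1 := key F' hF'
  have h2 : (F'.filter (fun e => w e = 1)).card ≤ wt w F' := by
    have hcong : ∀ e ∈ F'.filter (fun e => w e = 1), w e = 1 := fun e he =>
      (Finset.mem_filter.mp he).2
    unfold wt
    calc (F'.filter (fun e => w e = 1)).card
        = ∑ e ∈ F'.filter (fun e => w e = 1), w e := by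
          rw [Finset.sum_congr rfl hcong, Finset.sum_const, smul_eq_mul, mul_one]
      _ ≤ ∑ e ∈ F', w e := Finset.sum_le_sum_of_subset (Finset.filter_subset _ _)
  omega
end

section
/- Let H be a finite simple 2-edge-connected graph with 0/1 edge weights whose zero-edges form a matching. If H contains exactly 2 unit-edges, then H is a cycle on 3 or 4 vertices. -/
open scoped Classical

private lemma exists_adj_of_reachable {V : Type*} {G : SimpleGraph V} {v u : V}
    (h : G.Reachable v u) (hne : v ≠ u) : ∃ x, G.Adj v x := by
  obtain ⟨p⟩ := h
  cases p with
  | nil => exact absurd rfl hne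
  | cons h p => exact ⟨_, h⟩

private lemma min_degree_two {V : Type*} [Fintype V] {G : SimpleGraph V}
    (hG : TwoEdgeConnected G) (v : V) : 2 ≤ G.degree v := by
  obtain ⟨hconn, hcard, hbridge⟩ := hG
  obtain ⟨u, hu⟩ := Fintype.exists_ne_of_one_lt_card (by omega) v
  obtain ⟨x, hx⟩ := exists_adj_of_reachable (hconn.preconnected v u) (Ne.symm hu)
  by_contra hlt
  push_neg at hlt
  have hx' : x ∈ G.neighborFinset v := by simpa using hx
  have hd : (G.neighborFinset v).card < 2 := hlt
  have hset : G.neighborFinset v = {x} :=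
    Finset.eq_singleton_iff_unique_mem.mpr
      ⟨hx', fun y hy => Finset.card_le_one.mp (by omega) y hy x hx'⟩
  have he : s(v, x) ∈ G.edgeSet := hx
  obtain ⟨y, hy⟩ := exists_adj_of_reachable ((hbridge _ he).preconnected v u) (Ne.symm hu)
  rw [SimpleGraph.deleteEdges_adj] at hy
  have hmem : y ∈ G.neighborFinset v := by simpa using hy.1
  rw [hset] at hmem
  simp at hmem
  subst hmem
  exact hy.2 (by simp)

private lemma edge_two_verts {V : Type*} [Fintype V] {G : SimpleGraph V} {e : Sym2 V}
    (he : e ∈ G.edgeSet) : (∑ v : V, if v ∈ e then (1:ℕ) else 0) = 2 := by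
  induction e using Sym2.ind with
  | _ a b =>
    have hab : G.Adj a b := he
    have h1 : (Finset.univ.filter (fun v => v ∈ s(a, b))) = {a, b} := by
      ext v; simp [Sym2.mem_iff]
    rw [Finset.sum_ite, Finset.sum_const, Finset.sum_const, h1, Finset.card_pair hab.ne]
    simp

theorem stmt12 {V : Type*} [Fintype V]
    (H : SimpleGraph V) (w : Sym2 V → ℕ)
    (hw : ∀ e ∈ H.edgeSet, w e ≤ 1) (hmatch : ZeroEdgesMatching H w)
    (hH : TwoEdgeConnected H)
    (h2 : (H.edgeFinset.filter (fun e => w e = 1)).card = 2) :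
    H.Connected ∧ (∀ v : V, H.degree v = 2) ∧
      (Fintype.card V = 3 ∨ Fintype.card V = 4) := by
  set U : Finset (Sym2 V) := H.edgeFinset.filter (fun e => w e = 1) with hU
  set uv : V → ℕ := fun v => (U.filter (fun e => v ∈ e)).card with huv
  set zv : V → ℕ :=
    fun v => ((H.edgeFinset.filter (fun e => w e = 0)).filter (fun e => v ∈ e)).card with hzv
  have hdeg : ∀ v, H.degree v = uv v + zv v := by
    intro v
    have hinc : H.incidenceFinset v = H.edgeFinset.filter (fun e => v ∈ e) := by
      ext e
      simp [SimpleGraph.mem_incidenceFinset, SimpleGraph.incidenceSet,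
        SimpleGraph.mem_edgeFinset]
    have hsplit := Finset.card_filter_add_card_filter_not
      (s := H.edgeFinset.filter (fun e => v ∈ e)) (p := fun e => w e = 1)
    have hzz : zv v = ((H.edgeFinset.filter (fun e => v ∈ e)).filter
        (fun e => ¬ w e = 1)).card := by
      rw [hzv]
      simp only
      rw [Finset.filter_comm]
      congr 1
      apply Finset.filter_congr
      intro e he
      simp only [Finset.mem_filter, SimpleGraph.mem_edgeFinset] at he
      have := hw e he.1
      constructor <;> intro h <;> omega
    rw [← SimpleGraph.card_incidenceFinset_eq_degree, hinc, ← hsplit, hzz]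
    congr 1
    rw [huv]
    simp only
    rw [Finset.filter_comm, hU]
  have hz1 : ∀ v, zv v ≤ 1 := by
    intro v
    apply Finset.card_le_one.mpr
    intro e he f hf
    simp only [Finset.mem_filter, SimpleGraph.mem_edgeFinset] at he hf
    by_contra hne
    exact hmatch e he.1.1 f hf.1.1 he.1.2 hf.1.2 hne v ⟨he.2, hf.2⟩
  have hsum : ∑ v : V, uv v = 4 := by
    have h' : ∑ v : V, uv v = ∑ e ∈ U, (∑ v : V, if v ∈ e then (1:ℕ) else 0) := by
      simp only [huv, Finset.card_filter]
      rw [Finset.sum_comm]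
    rw [h', Finset.sum_congr rfl (fun e he => edge_two_verts (G := H)
      (by simp only [hU, Finset.mem_filter, SimpleGraph.mem_edgeFinset] at he; exact he.1))]
    simp [h2]
  have hmin := min_degree_two hH
  have hu1 : ∀ v, 1 ≤ uv v := by
    intro v
    have := hmin v
    have := hdeg v
    have := hz1 v
    omega
  have hcard4 : Fintype.card V ≤ 4 := by
    calc Fintype.card V = ∑ _v : V, 1 := by
            simp
      _ ≤ ∑ v : V, uv v := Finset.sum_le_sum fun v _ => hu1 v
      _ = 4 := hsum
  have : Nonempty V := Fintype.card_pos_iff.mp (by have := hH.2.1; omega)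
  obtain ⟨v0⟩ := this
  have hcard3 : 3 ≤ Fintype.card V := by
    have ha := SimpleGraph.degree_lt_card_verts (G := H) v0
    have hb := hmin v0
    omega
  refine ⟨hH.1, ?_, by omega⟩
  intro v
  have hlt := SimpleGraph.degree_lt_card_verts (G := H) v
  have hge := hmin v
  rcases (by omega : Fintype.card V = 3 ∨ Fintype.card V = 4) with h3 | h4
  · omega
  · have huv1 : uv v = 1 := by
      by_contra hne
      have h2le : 2 ≤ uv v := by have := hu1 v; omega
      have key : ∀ x ∈ Finset.univ, (if x = v then 2 else 1) ≤ uv x := fun x _ => by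
        by_cases hx : x = v
        · subst hx; simpa using h2le
        · simpa [hx] using hu1 x
      have hge5 := Finset.sum_le_sum key
      have heval : (∑ x : V, if x = v then (2:ℕ) else 1) = Fintype.card V + 1 := by
        have hrw : ∀ x : V, (if x = v then (2:ℕ) else 1) = 1 + (if x = v then 1 else 0) := by
          intro x; split <;> rfl
        simp only [hrw, Finset.sum_add_distrib, Finset.sum_const, Finset.card_univ,
          smul_eq_mul, mul_one, Finset.sum_ite_eq', Finset.mem_univ, if_true]
      omega
    have := hdeg v
    have := hz1 v
    omega
end
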